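/- arXiv:1907.06755 — 9 statements merged into one kernel-verified Lean document; each statement's English description precedes it below -/
import Mathlib

section
/- Let k be an algebraically closed field of characteristic p ≥ 5. Then there exists a binary quartic form f ≠ 0 with Q(f) = 0 such that the stabilizer of the line ⟨f⟩ in GL₂(k), taken modulo the subgroup of nonzero scalar matrices, is isomorphic to the alternating group on 4 letters. -/
open MvPolynomial

/-- The action of a `2×2` matrix on a polynomial in the two variables `x = X 0`, `y = X 1`
by linear substitution of the variables. -/
noncomputable def quarticAct {k : Type*} [CommRing k] (g : Matrix (Fin 2) (Fin 2) k)
    (f : MvPolynomial (Fin 2) k) : MvPolynomial (Fin 2) k :=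
  aeval (fun i => ∑ j : Fin 2, C (g i j) * X j) f

/-- The invariant `Q(f) = 12ae - 3bd + c²` of the binary quartic form
`f = a·x⁴ + b·x³y + c·x²y² + d·xy³ + e·y⁴`. -/
noncomputable def quarticQ {k : Type*} [CommRing k] (f : MvPolynomial (Fin 2) k) : k :=
  12 * coeff (Finsupp.single (0 : Fin 2) 4) f * coeff (Finsupp.single (1 : Fin 2) 4) f
    - 3 * coeff (Finsupp.single (0 : Fin 2) 3 + Finsupp.single (1 : Fin 2) 1) f *
        coeff (Finsupp.single (0 : Fin 2) 1 + Finsupp.single (1 : Fin 2) 3) f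
    + coeff (Finsupp.single (0 : Fin 2) 2 + Finsupp.single (1 : Fin 2) 2) f ^ 2

/-- The stabilizer of the line `⟨f⟩` in `GL₂(k)`: those `g` with `g·f ∈ k·f`. -/
def lineStabSet {k : Type*} [Field k] (f : MvPolynomial (Fin 2) k) :
    Set (Matrix.GeneralLinearGroup (Fin 2) k) :=
  {g | ∃ c : kˣ, quarticAct (↑g : Matrix (Fin 2) (Fin 2) k) f = (c : k) • f}

namespace Stmt1Aux

variable {k : Type*} [Field k]

noncomputable def fq : MvPolynomial (Fin 2) k := X 0 ^ 4 - X 0 * X 1 ^ 3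

def Pt (ω : k) : Fin 4 → Fin 2 → k := ![![0,1], ![1,1], ![ω,1], ![ω^2,1]]

def Realizes (ω : k) (M : Matrix (Fin 2) (Fin 2) k) (σ : Equiv.Perm (Fin 4)) : Prop :=
  ∀ i, ∃ c : kˣ, M.mulVec (Pt ω i) = (c : k) • Pt ω (σ i)

lemma mulVec_fin2 (M : Matrix (Fin 2) (Fin 2) k) (s t : k) :
    M.mulVec ![s, t] = ![M 0 0 * s + M 0 1 * t, M 1 0 * s + M 1 1 * t] := by
  funext i
  fin_cases i <;> simp [Matrix.mulVec, dotProduct, Fin.sum_univ_two]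

lemma smul_pair (c a b : k) : c • (![a, b] : Fin 2 → k) = ![c * a, c * b] := by
  funext i; fin_cases i <;> simp

lemma para_mk {u : Fin 2 → k} {a b c : k} (hc : c ≠ 0) (h0 : u 0 = c * a) (h1 : u 1 = c * b) :
    ∃ d : kˣ, u = (d : k) • ![a, b] := by
  refine ⟨Units.mk0 c hc, ?_⟩
  funext i; fin_cases i <;> simp [h0, h1]

lemma eval_aeval' (v : Fin 2 → k) (s : Fin 2 → MvPolynomial (Fin 2) k)
    (f : MvPolynomial (Fin 2) k) :
    eval v (aeval s f) = eval (fun i => eval v (s i)) f := by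
  induction f using MvPolynomial.induction_on with
  | C a => simp only [aeval_C, algebraMap_eq, eval_C]
  | add p q hp hq => simp only [map_add, hp, hq]
  | mul_X p i hp => simp only [map_mul, aeval_X, eval_X, hp]

lemma eval_fq (v : Fin 2 → k) : eval v (fq (k := k)) = v 0 ^ 4 - v 0 * v 1 ^ 3 := by
  simp [fq]

lemma pt0 {ω : k} : Pt ω 0 = ![(0:k),1] := by simp [Pt]
lemma pt1 {ω : k} : Pt ω 1 = ![(1:k),1] := by simp [Pt]
lemma pt2 {ω : k} : Pt ω 2 = ![ω,1] := by simp [Pt]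
lemma pt3 {ω : k} : Pt ω 3 = ![ω^2,1] := by simp [Pt]

section Omega
variable {ω : k} (hω : ω ^ 2 + ω + 1 = 0) (h3 : (3 : k) ≠ 0)

include hω

lemma omega_cube : ω ^ 3 = 1 := by linear_combination (ω - 1) * hω

lemma omega_ne_zero : ω ≠ 0 := by
  intro h; rw [h] at hω; simp at hω

lemma omega_ne_negone : ω ≠ -1 := by
  intro h; rw [h] at hω; norm_num at hω

lemma eval_fq_factor (v : Fin 2 → k) :
    eval v (fq (k := k)) =
      v 0 * (v 0 - v 1) * (v 0 - ω * v 1) * (v 0 - ω ^ 2 * v 1) := by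
  rw [eval_fq]
  linear_combination (v 0 ^3 * v 1 - ω * v 0^2 * v 1^2 + (ω - 1) * v 0 * v 1^3) * hω

/-- the roots of `fq` are exactly the lines through the four points -/
lemma root_lemma {v : Fin 2 → k} (hv : v ≠ 0) (h : eval v (fq (k := k)) = 0) :
    ∃ j, ∃ c : kˣ, v = (c : k) • Pt ω j := by
  have key2 : v 1 = 0 → v 0 = 0 → False := by
    intro hz h0
    exact hv (funext fun i => by fin_cases i <;> simp [h0, hz])
  rw [eval_fq_factor hω] at h
  rcases mul_eq_zero.1 h with h' | h4
  · rcases mul_eq_zero.1 h' with h'' | h2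
    · rcases mul_eq_zero.1 h'' with h0 | h1
      · have hv1 : v 1 ≠ 0 := fun hz => key2 hz h0
        exact ⟨0, by rw [pt0]; exact para_mk hv1 (by rw [h0, mul_zero]) (mul_one _).symm⟩
      · have he : v 0 = v 1 := sub_eq_zero.1 h1
        have hv1 : v 1 ≠ 0 := fun hz => key2 hz (he.trans hz)
        exact ⟨1, by rw [pt1]; exact para_mk hv1 (by rw [he, mul_one]) (mul_one _).symm⟩
    · have he : v 0 = ω * v 1 := sub_eq_zero.1 h2
      have hv1 : v 1 ≠ 0 := fun hz => key2 hz (by rw [he, hz, mul_zero])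
      exact ⟨2, by rw [pt2]; exact para_mk hv1 (by rw [he, mul_comm]) (mul_one _).symm⟩
  · have he : v 0 = ω ^ 2 * v 1 := sub_eq_zero.1 h4
    have hv1 : v 1 ≠ 0 := fun hz => key2 hz (by rw [he, hz, mul_zero])
    exact ⟨3, by rw [pt3]; exact para_mk hv1 (by rw [he, mul_comm]) (mul_one _).symm⟩

include h3

lemma omega_ne_one : ω ≠ 1 := by
  intro h; rw [h] at hω; apply h3; linear_combination hω

lemma omega_sq_ne_one : ω ^ 2 ≠ 1 := by
  intro h; exact h3 (by linear_combination (ω - 1) * h - (ω - 2) * hω)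

lemma omega_ne_sq : ω ≠ ω ^ 2 := by
  intro h
  exact h3 (by linear_combination (2*ω + 1) * h.symm - (2*ω - 3) * hω)

/-- the four slope values are distinct -/
lemma slopes_inj : Function.Injective (![0, 1, ω, ω^2] : Fin 4 → k) := by
  have h1 := omega_ne_one hω h3
  have h2 := omega_sq_ne_one hω h3
  have h4 := omega_ne_sq hω h3
  have h0 := omega_ne_zero hω
  have hn := omega_ne_negone hω
  have h0' : ω ^ 2 ≠ 0 := pow_ne_zero _ h0
  intro i j hij
  fin_cases i <;> fin_cases j <;> simp at hij ⊢ <;>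
    first
      | rfl
      | exact h0 hij | exact h0 hij.symm
      | exact h0' hij | exact h0' hij.symm
      | exact h1 hij | exact h1 hij.symm
      | exact h2 hij | exact h2 hij.symm
      | exact h4 hij | exact h4 hij.symm
      | exact hij.elim h1 hn

lemma pt_inj (i j : Fin 4) (c : kˣ) (h : Pt ω i = (c : k) • Pt ω j) : i = j := by
  have h2 : Pt ω i 1 = (c : k) * Pt ω j 1 := by rw [h]; rfl
  have hone : ∀ l, Pt ω l 1 = 1 := by intro l; fin_cases l <;> rfl
  rw [hone, hone, mul_one] at h2
  have h0 : Pt ω i 0 = Pt ω j 0 := by rw [h]; show (c:k) * _ = _; rw [← h2, one_mul]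
  have hv : ∀ l, Pt ω l 0 = ![0, 1, ω, ω^2] l := by intro l; fin_cases l <;> rfl
  rw [hv, hv] at h0
  exact slopes_inj hω h3 h0


omit h3 in
lemma eval_fq_pt (i : Fin 4) : eval (Pt ω i) (fq (k := k)) = 0 := by
  have e0 : eval (Pt ω 0) (fq (k := k)) = 0 := by
    rw [pt0, eval_fq]; simp
  have e1 : eval (Pt ω 1) (fq (k := k)) = 0 := by
    rw [pt1, eval_fq]; simp
  have e2 : eval (Pt ω 2) (fq (k := k)) = 0 := by
    rw [pt2, eval_fq]
    show ω ^ 4 - ω * 1 ^ 3 = 0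
    linear_combination (ω^2 - ω) * hω
  have e3 : eval (Pt ω 3) (fq (k := k)) = 0 := by
    rw [pt3, eval_fq]
    show (ω^2) ^ 4 - ω^2 * 1 ^ 3 = 0
    linear_combination (ω^6 + ω^3 - ω^5 - ω^2) * hω
  fin_cases i
  exacts [e0, e1, e2, e3]

end Omega

lemma eval_quarticAct (M : Matrix (Fin 2) (Fin 2) k) (v : Fin 2 → k)
    (f : MvPolynomial (Fin 2) k) :
    eval v (quarticAct M f) = eval (M.mulVec v) f := by
  rw [quarticAct, eval_aeval']
  have hh : (fun i => eval v (∑ j : Fin 2, C (M i j) * X j)) = M.mulVec v := by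
    funext i
    simp [Matrix.mulVec, dotProduct, Fin.sum_univ_two]
  rw [hh]

lemma pt_ne_zero (ω : k) (i : Fin 4) : Pt ω i ≠ 0 := by
  intro h
  have : Pt ω i 1 = 0 := by rw [h]; rfl
  have hone : Pt ω i 1 = 1 := by fin_cases i <;> rfl
  rw [hone] at this
  exact one_ne_zero this

lemma mulVec_ne_zero (g : Matrix.GeneralLinearGroup (Fin 2) k) {v : Fin 2 → k} (hv : v ≠ 0) :
    (↑g : Matrix (Fin 2) (Fin 2) k).mulVec v ≠ 0 := by
  intro h
  apply hv
  have h2 : (↑g⁻¹ : Matrix (Fin 2) (Fin 2) k).mulVec ((↑g : Matrix (Fin 2) (Fin 2) k).mulVec v) = v := by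
    rw [Matrix.mulVec_mulVec]
    have h1 : (↑g⁻¹ : Matrix (Fin 2) (Fin 2) k) * (↑g : Matrix (Fin 2) (Fin 2) k) = 1 :=
      g.inv_mul
    rw [h1, Matrix.one_mulVec]
  rw [← h2, h, Matrix.mulVec_zero]

section Omega2
variable {ω : k} (hω : ω ^ 2 + ω + 1 = 0) (h3 : (3 : k) ≠ 0)

include hω h3

lemma realizes_unique {M : Matrix (Fin 2) (Fin 2) k} {σ τ : Equiv.Perm (Fin 4)}
    (h1 : Realizes ω M σ) (h2 : Realizes ω M τ) : σ = τ := by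
  refine Equiv.ext fun i => ?_
  obtain ⟨c, hc⟩ := h1 i
  obtain ⟨d, hd⟩ := h2 i
  have h0 : (c : k) • Pt ω (σ i) = (d : k) • Pt ω (τ i) := hc.symm.trans hd
  have h' : Pt ω (σ i) = ((c⁻¹ * d : kˣ) : k) • Pt ω (τ i) := by
    calc Pt ω (σ i) = ((c⁻¹ : kˣ) : k) • ((c : k) • Pt ω (σ i)) := by
          rw [smul_smul, Units.inv_mul, one_smul]
      _ = ((c⁻¹ : kˣ) : k) • ((d : k) • Pt ω (τ i)) := by rw [h0]
      _ = ((c⁻¹ * d : kˣ) : k) • Pt ω (τ i) := by rw [Units.val_mul, smul_smul]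
  exact pt_inj hω h3 _ _ _ h'

omit hω h3 in
lemma realizes_mul {M N : Matrix (Fin 2) (Fin 2) k} {σ τ : Equiv.Perm (Fin 4)}
    (hM : Realizes ω M σ) (hN : Realizes ω N τ) : Realizes ω (M * N) (σ * τ) := by
  intro i
  obtain ⟨c, hc⟩ := hN i
  obtain ⟨d, hd⟩ := hM (τ i)
  refine ⟨d * c, ?_⟩
  rw [← Matrix.mulVec_mulVec, hc, Matrix.mulVec_smul, hd, Equiv.Perm.mul_apply,
    smul_smul, Units.val_mul, mul_comm (d:k) (c:k)]

omit hω h3 in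
lemma para_elim {M : Matrix (Fin 2) (Fin 2) k} {s t a b : k} {c : kˣ}
    (h : M.mulVec ![s, t] = (c : k) • ![a, b]) :
    M 0 0 * s + M 0 1 * t = c * a ∧ M 1 0 * s + M 1 1 * t = c * b := by
  rw [mulVec_fin2, smul_pair] at h
  exact ⟨congrFun h 0, congrFun h 1⟩

end Omega2

lemma aeval_aeval (s t : Fin 2 → MvPolynomial (Fin 2) k) (f : MvPolynomial (Fin 2) k) :
    aeval s (aeval t f) = aeval (fun i => aeval s (t i)) f := by
  induction f using MvPolynomial.induction_on with
  | C a => simp only [aeval_C, algebraMap_eq]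
  | add p q hp hq => simp only [map_add, hp, hq]
  | mul_X p i hp => simp only [map_mul, aeval_X, hp]

lemma quarticAct_mul (M N : Matrix (Fin 2) (Fin 2) k) (f : MvPolynomial (Fin 2) k) :
    quarticAct (M * N) f = quarticAct N (quarticAct M f) := by
  rw [quarticAct, quarticAct, quarticAct, aeval_aeval]
  have hh : (fun i => ∑ j : Fin 2, C ((M * N) i j) * X j) =
      (fun i => aeval (fun i' => ∑ j : Fin 2, C (N i' j) * X j)
        (∑ j : Fin 2, C (M i j) * X j) : Fin 2 → MvPolynomial (Fin 2) k) := by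
    funext i
    simp only [map_sum, map_mul, aeval_C, aeval_X, algebraMap_eq, Matrix.mul_apply,
      Fin.sum_univ_two, map_add]
    ring
  rw [hh]

lemma stab_mul {f : MvPolynomial (Fin 2) k} {g h : Matrix.GeneralLinearGroup (Fin 2) k}
    (hg : g ∈ lineStabSet f) (hh : h ∈ lineStabSet f) : g * h ∈ lineStabSet f := by
  obtain ⟨c, hc⟩ := hg
  obtain ⟨d, hd⟩ := hh
  refine ⟨c * d, ?_⟩
  have hmul : (↑(g * h) : Matrix (Fin 2) (Fin 2) k) =
      (↑g : Matrix (Fin 2) (Fin 2) k) * (↑h : Matrix (Fin 2) (Fin 2) k) := rfl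
  rw [hmul, quarticAct_mul, hc,
    show quarticAct (↑h : Matrix (Fin 2) (Fin 2) k) ((c : k) • f) =
        (c : k) • quarticAct (↑h : Matrix (Fin 2) (Fin 2) k) f from map_smul (aeval _) _ _,
    hd, smul_smul, Units.val_mul]

section Omega3
variable {ω : k} (hω : ω ^ 2 + ω + 1 = 0) (h3 : (3 : k) ≠ 0)
include hω

omit hω in
lemma realizes_scalar (c : kˣ) :
    Realizes ω (((c : k) • 1 : Matrix (Fin 2) (Fin 2) k)) 1 := by
  intro i
  refine ⟨c, ?_⟩
  rw [Matrix.smul_mulVec, Matrix.one_mulVec, Equiv.Perm.one_apply]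

lemma exists_perm_of_stab (g : Matrix.GeneralLinearGroup (Fin 2) k) (h3 : (3:k) ≠ 0)
    (hg : g ∈ lineStabSet (fq (k := k))) :
    ∃ σ : Equiv.Perm (Fin 4), Realizes ω (↑g : Matrix (Fin 2) (Fin 2) k) σ := by
  obtain ⟨c, hc⟩ := hg
  have root : ∀ i, ∃ j, ∃ d : kˣ,
      (↑g : Matrix (Fin 2) (Fin 2) k).mulVec (Pt ω i) = (d : k) • Pt ω j := by
    intro i
    apply root_lemma hω (mulVec_ne_zero g (pt_ne_zero ω i))
    rw [← eval_quarticAct, hc, smul_eq_C_mul, map_mul, eval_C, eval_fq_pt hω, mul_zero]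
  choose m d hd using root
  have hback : ∀ v : Fin 2 → k,
      (↑g⁻¹ : Matrix (Fin 2) (Fin 2) k).mulVec
        ((↑g : Matrix (Fin 2) (Fin 2) k).mulVec v) = v := by
    intro v
    rw [Matrix.mulVec_mulVec,
      show (↑g⁻¹ : Matrix (Fin 2) (Fin 2) k) * (↑g : Matrix (Fin 2) (Fin 2) k) = 1 from
        g.inv_mul, Matrix.one_mulVec]
  have minj : Function.Injective m := by
    intro i i' hii
    have e1 : (↑g : Matrix (Fin 2) (Fin 2) k).mulVec (Pt ω i) =
        ((d i * (d i')⁻¹ : kˣ) : k) •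
          (↑g : Matrix (Fin 2) (Fin 2) k).mulVec (Pt ω i') := by
      rw [hd i, hd i', hii, smul_smul, ← Units.val_mul, inv_mul_cancel_right]
    have e2 : Pt ω i = ((d i * (d i')⁻¹ : kˣ) : k) • Pt ω i' := by
      calc Pt ω i
          = (↑g⁻¹ : Matrix (Fin 2) (Fin 2) k).mulVec
              ((↑g : Matrix (Fin 2) (Fin 2) k).mulVec (Pt ω i)) := (hback _).symm
        _ = (↑g⁻¹ : Matrix (Fin 2) (Fin 2) k).mulVec
              (((d i * (d i')⁻¹ : kˣ) : k) •
                (↑g : Matrix (Fin 2) (Fin 2) k).mulVec (Pt ω i')) := by rw [e1]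
        _ = ((d i * (d i')⁻¹ : kˣ) : k) •
              ((↑g⁻¹ : Matrix (Fin 2) (Fin 2) k).mulVec
                ((↑g : Matrix (Fin 2) (Fin 2) k).mulVec (Pt ω i'))) :=
            Matrix.mulVec_smul _ _ _
        _ = ((d i * (d i')⁻¹ : kˣ) : k) • Pt ω i' := by rw [hback]
    exact pt_inj hω h3 _ _ _ e2
  refine ⟨Equiv.ofBijective m (Finite.injective_iff_bijective.1 minj), fun i => ⟨d i, ?_⟩⟩
  exact hd i

include h3 in
lemma no_swap (g : Matrix.GeneralLinearGroup (Fin 2) k)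
    (h : Realizes ω (↑g : Matrix (Fin 2) (Fin 2) k) (Equiv.swap 1 2)) : False := by
  have h1ω : (1 : k) - ω ≠ 0 := sub_ne_zero.2 (Ne.symm (omega_ne_one hω h3))
  obtain ⟨c0, h0⟩ := h 0
  obtain ⟨c1, h1⟩ := h 1
  obtain ⟨c2, h2⟩ := h 2
  obtain ⟨c3, h4⟩ := h 3
  rw [show (Equiv.swap (1 : Fin 4) 2) 0 = 0 from by decide, pt0] at h0
  rw [show (Equiv.swap (1 : Fin 4) 2) 1 = 2 from by decide, pt1, pt2] at h1
  rw [show (Equiv.swap (1 : Fin 4) 2) 2 = 1 from by decide, pt2, pt1] at h2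
  rw [show (Equiv.swap (1 : Fin 4) 2) 3 = 3 from by decide, pt3] at h4
  obtain ⟨e00, e01⟩ := para_elim h0
  obtain ⟨e10, e11⟩ := para_elim h1
  obtain ⟨e20, e21⟩ := para_elim h2
  obtain ⟨e30, e31⟩ := para_elim h4
  set M := (↑g : Matrix (Fin 2) (Fin 2) k) with hM
  have hB : M 0 1 = 0 := by linear_combination e00
  have E1 : M 0 0 = ω * M 1 0 + ω * M 1 1 := by linear_combination e10 - ω * e11 - hB
  have E2 : ω * M 0 0 = ω * M 1 0 + M 1 1 := by linear_combination e20 - e21 - hB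
  have E3' : M 0 0 * ω ^ 2 = (ω ^ 2 * M 1 0 + M 1 1) * ω ^ 2 := by
    linear_combination e30 - ω ^ 2 * e31 - hB
  have E3 : M 0 0 = ω ^ 2 * M 1 0 + M 1 1 :=
    mul_right_cancel₀ (pow_ne_zero 2 (omega_ne_zero hω)) E3'
  have hd1 : (1 - ω) * (ω * M 1 0 - M 1 1) = 0 := by linear_combination E3 - E1
  have hCD : ω * M 1 0 = M 1 1 := sub_eq_zero.1 ((mul_eq_zero.1 hd1).resolve_left h1ω)
  have hd2 : (1 - ω) * (M 1 1 - M 1 0) = 0 := by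
    linear_combination ω * E3 - E2 + M 1 0 * (ω - 1) * hω
  have hC : M 1 0 = M 1 1 := (sub_eq_zero.1 ((mul_eq_zero.1 hd2).resolve_left h1ω)).symm
  have hCz : (ω - 1) * M 1 0 = 0 := by linear_combination hCD - hC
  have hC0 : M 1 0 = 0 :=
    (mul_eq_zero.1 hCz).resolve_left (sub_ne_zero.2 (omega_ne_one hω h3))
  have : (c0 : k) = 0 := by linear_combination hC0 - hC - e01
  exact c0.ne_zero this


end Omega3

def rPerm : Equiv.Perm (Fin 4) := Equiv.swap 1 2 * Equiv.swap 2 3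
def sPerm : Equiv.Perm (Fin 4) := Equiv.swap 0 1 * Equiv.swap 2 3

section Gen
variable {ω : k} (hω : ω ^ 2 + ω + 1 = 0) (h3 : (3 : k) ≠ 0)

/-- a permutation together with a line-stabilizing matrix realizing it -/
def Good (ω : k) (σ : Equiv.Perm (Fin 4)) : Prop :=
  ∃ g : Matrix.GeneralLinearGroup (Fin 2) k,
    g ∈ lineStabSet (fq (k := k)) ∧ Realizes ω (↑g : Matrix (Fin 2) (Fin 2) k) σ

omit hω h3 in
lemma good_mul {σ τ : Equiv.Perm (Fin 4)} (h1 : Good ω σ) (h2 : Good ω τ) :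
    Good ω (σ * τ) := by
  obtain ⟨g, hg, hgr⟩ := h1
  obtain ⟨g', hg', hgr'⟩ := h2
  exact ⟨g * g', stab_mul hg hg', realizes_mul hgr hgr'⟩

include hω

lemma good_r : Good (k := k) ω rPerm := by
  have hc := omega_cube hω
  refine ⟨⟨!![ω,0;0,1], !![ω^2,0;0,1], ?_, ?_⟩, ⟨Units.mk0 ω (omega_ne_zero hω), ?_⟩, ?_⟩
  · ext i j
    fin_cases i <;> fin_cases j <;>
      simp [Matrix.mul_apply, Fin.sum_univ_two, Matrix.one_apply] <;>
      linear_combination (ω - 1) * hω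
  · ext i j
    fin_cases i <;> fin_cases j <;>
      simp [Matrix.mul_apply, Fin.sum_univ_two, Matrix.one_apply] <;>
      linear_combination (ω - 1) * hω
  · show quarticAct !![ω,0;0,1] (fq (k := k)) = (ω : k) • fq
    rw [quarticAct, fq, smul_eq_C_mul]
    have hCω : (C ω : MvPolynomial (Fin 2) k) ^ 3 = 1 := by
      rw [← map_pow, hc, map_one]
    simp only [map_sub, map_mul, map_pow, map_sum, aeval_X, aeval_C, algebraMap_eq,
      Fin.sum_univ_two]
    simp only [show ((!![ω,0;0,1] : Matrix (Fin 2) (Fin 2) k) 0 0) = ω from rfl,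
      show ((!![ω,0;0,1] : Matrix (Fin 2) (Fin 2) k) 0 1) = 0 from rfl,
      show ((!![ω,0;0,1] : Matrix (Fin 2) (Fin 2) k) 1 0) = 0 from rfl,
      show ((!![ω,0;0,1] : Matrix (Fin 2) (Fin 2) k) 1 1) = 1 from rfl, map_zero, map_one]
    linear_combination (C ω * X 0 ^ 4 : MvPolynomial (Fin 2) k) * hCω
  · show Realizes ω !![ω,0;0,1] rPerm
    have k0 : ∃ c : kˣ, (!![ω,0;0,1] : Matrix (Fin 2) (Fin 2) k).mulVec (Pt ω 0) =
        (c : k) • Pt ω (rPerm 0) := by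
      rw [show rPerm 0 = 0 from by decide, pt0, mulVec_fin2]
      exact ⟨1, by funext j; fin_cases j <;> simp⟩
    have k1 : ∃ c : kˣ, (!![ω,0;0,1] : Matrix (Fin 2) (Fin 2) k).mulVec (Pt ω 1) =
        (c : k) • Pt ω (rPerm 1) := by
      rw [show rPerm 1 = 2 from by decide, pt1, pt2, mulVec_fin2]
      exact ⟨1, by funext j; fin_cases j <;> simp⟩
    have k2 : ∃ c : kˣ, (!![ω,0;0,1] : Matrix (Fin 2) (Fin 2) k).mulVec (Pt ω 2) =
        (c : k) • Pt ω (rPerm 2) := by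
      rw [show rPerm 2 = 3 from by decide, pt2, pt3, mulVec_fin2]
      exact ⟨1, by funext j; fin_cases j <;> simp <;> ring⟩
    have k3 : ∃ c : kˣ, (!![ω,0;0,1] : Matrix (Fin 2) (Fin 2) k).mulVec (Pt ω 3) =
        (c : k) • Pt ω (rPerm 3) := by
      rw [show rPerm 3 = 1 from by decide, pt3, pt1, mulVec_fin2]
      refine ⟨1, by funext j; fin_cases j <;> simp
        <;> linear_combination (ω - 1) * hω⟩
    intro i; fin_cases i
    exacts [k0, k1, k2, k3]

include h3

lemma two_omega_one_ne (h : 2 * ω + 1 = 0) : False :=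
  h3 (by linear_combination 4 * hω - (2 * ω + 1) * h)

lemma two_omegasq_one_ne (h : 2 * ω ^ 2 + 1 = 0) : False :=
  h3 (by linear_combination (2 - 4 * ω) * hω + (2 * ω + 1) * h)

lemma good_s : Good (k := k) ω sPerm := by
  have h9 : (9 : k) ≠ 0 := by
    have h' := mul_ne_zero h3 h3
    rwa [show (3 : k) * 3 = 9 by norm_num] at h'
  have hinv : ∀ A : Matrix (Fin 2) (Fin 2) k, A = !![-1,1;2,1] →
      A * ((3 : k)⁻¹ • !![-1,1;2,1]) = 1 ∧ ((3 : k)⁻¹ • !![-1,1;2,1]) * A = 1 := by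
    rintro A rfl
    constructor <;>
      (ext i j; fin_cases i <;> fin_cases j <;>
        simp [Matrix.mul_apply, Fin.sum_univ_two, Matrix.one_apply] <;>
        field_simp <;> ring)
  obtain ⟨hv, hiv⟩ := hinv _ rfl
  refine ⟨⟨!![-1,1;2,1], (3 : k)⁻¹ • !![-1,1;2,1], hv, hiv⟩,
    ⟨Units.mk0 9 h9, ?_⟩, ?_⟩
  · show quarticAct !![-1,1;2,1] (fq (k := k)) = (9 : k) • fq
    rw [quarticAct, fq, smul_eq_C_mul]
    simp only [map_sub, map_mul, map_pow, map_sum, aeval_X, aeval_C, algebraMap_eq,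
      Fin.sum_univ_two]
    simp only [show ((!![-1,1;2,1] : Matrix (Fin 2) (Fin 2) k) 0 0) = -1 from rfl,
      show ((!![-1,1;2,1] : Matrix (Fin 2) (Fin 2) k) 0 1) = 1 from rfl,
      show ((!![-1,1;2,1] : Matrix (Fin 2) (Fin 2) k) 1 0) = 2 from rfl,
      show ((!![-1,1;2,1] : Matrix (Fin 2) (Fin 2) k) 1 1) = 1 from rfl,
      map_one, map_neg, map_ofNat]
    ring
  · show Realizes ω !![-1,1;2,1] sPerm
    have k0 : ∃ c : kˣ, (!![-1,1;2,1] : Matrix (Fin 2) (Fin 2) k).mulVec (Pt ω 0) =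
        (c : k) • Pt ω (sPerm 0) := by
      rw [show sPerm 0 = 1 from by decide, pt0, pt1, mulVec_fin2]
      exact ⟨1, by funext j; fin_cases j <;> simp⟩
    have k1 : ∃ c : kˣ, (!![-1,1;2,1] : Matrix (Fin 2) (Fin 2) k).mulVec (Pt ω 1) =
        (c : k) • Pt ω (sPerm 1) := by
      rw [show sPerm 1 = 0 from by decide, pt1, pt0, mulVec_fin2]
      exact ⟨Units.mk0 3 h3, by funext j; fin_cases j <;> simp <;> ring⟩
    have k2 : ∃ c : kˣ, (!![-1,1;2,1] : Matrix (Fin 2) (Fin 2) k).mulVec (Pt ω 2) =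
        (c : k) • Pt ω (sPerm 2) := by
      rw [show sPerm 2 = 3 from by decide, pt2, pt3]
      refine para_mk (fun h => two_omega_one_ne hω h3 h) ?_ ?_
      · rw [mulVec_fin2]
        show (-1) * ω + 1 * 1 = (2 * ω + 1) * ω ^ 2
        linear_combination (1 - 2 * ω) * hω
      · rw [mulVec_fin2]
        show 2 * ω + 1 * 1 = (2 * ω + 1) * 1
        ring
    have k3 : ∃ c : kˣ, (!![-1,1;2,1] : Matrix (Fin 2) (Fin 2) k).mulVec (Pt ω 3) =
        (c : k) • Pt ω (sPerm 3) := by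
      rw [show sPerm 3 = 2 from by decide, pt3, pt2]
      refine para_mk (fun h => two_omegasq_one_ne hω h3 h) ?_ ?_
      · rw [mulVec_fin2]
        show (-1) * ω ^ 2 + 1 * 1 = (2 * ω ^ 2 + 1) * ω
        linear_combination -(2 * ω - 1) * hω
      · rw [mulVec_fin2]
        show 2 * ω ^ 2 + 1 * 1 = (2 * ω ^ 2 + 1) * 1
        ring
    intro i; fin_cases i
    exacts [k0, k1, k2, k3]

lemma good_even : ∀ σ : Equiv.Perm (Fin 4), Equiv.Perm.sign σ = 1 → Good (k := k) ω σ := by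
  have hr := good_r (k := k) hω
  have hs := good_s (k := k) hω h3
  have hlist : ∀ σ : Equiv.Perm (Fin 4), Equiv.Perm.sign σ = 1 →
      σ = rPerm * rPerm * rPerm ∨ σ = rPerm ∨ σ = rPerm * rPerm ∨ σ = sPerm ∨
      σ = sPerm * rPerm ∨ σ = sPerm * (rPerm * rPerm) ∨ σ = rPerm * sPerm ∨
      σ = rPerm * sPerm * rPerm ∨ σ = rPerm * sPerm * (rPerm * rPerm) ∨
      σ = rPerm * rPerm * sPerm ∨ σ = rPerm * rPerm * sPerm * rPerm ∨
      σ = rPerm * rPerm * sPerm * (rPerm * rPerm) := by decide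
  intro σ hσ
  rcases hlist σ hσ with h|h|h|h|h|h|h|h|h|h|h|h <;> subst h
  · exact good_mul (good_mul hr hr) hr
  · exact hr
  · exact good_mul hr hr
  · exact hs
  · exact good_mul hs hr
  · exact good_mul hs (good_mul hr hr)
  · exact good_mul hr hs
  · exact good_mul (good_mul hr hs) hr
  · exact good_mul (good_mul hr hs) (good_mul hr hr)
  · exact good_mul (good_mul hr hr) hs
  · exact good_mul (good_mul (good_mul hr hr) hs) hr
  · exact good_mul (good_mul (good_mul hr hr) hs) (good_mul hr hr)

lemma stab_even (g : Matrix.GeneralLinearGroup (Fin 2) k)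
    (hg : g ∈ lineStabSet (fq (k := k))) {σ : Equiv.Perm (Fin 4)}
    (hreal : Realizes ω (↑g : Matrix (Fin 2) (Fin 2) k) σ) :
    Equiv.Perm.sign σ = 1 := by
  by_contra hne
  have hsign : Equiv.Perm.sign σ = -1 := by
    rcases Int.units_eq_one_or (Equiv.Perm.sign σ) with h | h
    · exact absurd h hne
    · exact h
  have hτ : Equiv.Perm.sign (Equiv.swap (1 : Fin 4) 2 * σ⁻¹) = 1 := by
    rw [map_mul, map_inv, hsign, Equiv.Perm.sign_swap (by decide)]
    decide
  obtain ⟨h', hst', hre'⟩ := good_even hω h3 _ hτ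
  have hcomp := realizes_mul hre' hreal
  have hperm : Equiv.swap (1 : Fin 4) 2 * σ⁻¹ * σ = Equiv.swap (1 : Fin 4) 2 := by
    group
  rw [hperm] at hcomp
  exact no_swap hω h3 (h' * g)
    (by rw [show (↑(h' * g) : Matrix (Fin 2) (Fin 2) k) =
        (↑h' : Matrix (Fin 2) (Fin 2) k) * (↑g : Matrix (Fin 2) (Fin 2) k) from rfl]
        exact hcomp)

lemma realizes_one_scalar (g : Matrix.GeneralLinearGroup (Fin 2) k)
    (h : Realizes ω (↑g : Matrix (Fin 2) (Fin 2) k) 1) :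
    ∃ c : kˣ, (↑g : Matrix (Fin 2) (Fin 2) k) = (c : k) • 1 := by
  obtain ⟨c0, h0⟩ := h 0
  obtain ⟨c1, h1⟩ := h 1
  obtain ⟨c2, h2⟩ := h 2
  rw [Equiv.Perm.one_apply, pt0] at h0
  rw [Equiv.Perm.one_apply, pt1] at h1
  rw [Equiv.Perm.one_apply, pt2] at h2
  obtain ⟨e00, e01⟩ := para_elim h0
  obtain ⟨e10, e11⟩ := para_elim h1
  obtain ⟨e20, e21⟩ := para_elim h2
  set M := (↑g : Matrix (Fin 2) (Fin 2) k) with hM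
  have hB : M 0 1 = 0 := by linear_combination e00
  have hsub : M 1 0 * (ω - ω ^ 2) = 0 := by
    linear_combination (ω - 1) * hB - ω * e10 + ω * e11 + e20 - ω * e21
  have hC : M 1 0 = 0 :=
    (mul_eq_zero.1 hsub).resolve_right (sub_ne_zero.2 (omega_ne_sq hω h3))
  have hD : M 1 1 = (c0 : k) := by linear_combination e01
  have hA : M 0 0 = (c0 : k) := by linear_combination e10 - e11 - hB + hC + e01
  refine ⟨c0, ?_⟩
  show M = (c0 : k) • 1
  ext i j
  fin_cases i <;> fin_cases j <;>
    simp [Matrix.smul_apply, Matrix.one_apply, hA, hB, hC, hD]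

end Gen

lemma fq_monomials : (fq (k := k)) =
    monomial (Finsupp.single (0 : Fin 2) 4) (1 : k) -
      monomial (Finsupp.single (0 : Fin 2) 1 + Finsupp.single (1 : Fin 2) 3) (1 : k) := by
  rw [fq, X_pow_eq_monomial, show (X (0 : Fin 2) * X 1 ^ 3 : MvPolynomial (Fin 2) k) =
    X 0 ^ 1 * X 1 ^ 3 by ring, X_pow_eq_monomial, X_pow_eq_monomial, monomial_mul, one_mul]

lemma ne1 : Finsupp.single (0 : Fin 2) 4 ≠
    Finsupp.single (0 : Fin 2) 1 + Finsupp.single (1 : Fin 2) 3 := by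
  intro h
  have := DFunLike.congr_fun h (1 : Fin 2)
  simp [Finsupp.single_apply] at this

lemma fq_homog : (fq (k := k)).IsHomogeneous 4 := by
  have h1 : (X (0 : Fin 2) ^ 4 : MvPolynomial (Fin 2) k).IsHomogeneous 4 := by
    simpa using (isHomogeneous_X k (0 : Fin 2)).pow 4
  have h2 : (X (0 : Fin 2) * X 1 ^ 3 : MvPolynomial (Fin 2) k).IsHomogeneous 4 := by
    simpa using (isHomogeneous_X k (0 : Fin 2)).mul ((isHomogeneous_X k (1 : Fin 2)).pow 3)
  exact h1.sub h2

lemma fq_coeff_a : coeff (Finsupp.single (0 : Fin 2) 4) (fq (k := k)) = 1 := by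
  rw [fq_monomials, coeff_sub, coeff_monomial, coeff_monomial, if_pos rfl,
    if_neg (fun h => ne1 h.symm), sub_zero]

lemma fq_ne_zero : (fq (k := k)) ≠ 0 := by
  intro h
  have := fq_coeff_a (k := k)
  rw [h] at this
  simp at this

lemma fq_quarticQ : quarticQ (fq (k := k)) = 0 := by
  have hb : coeff (Finsupp.single (0 : Fin 2) 3 + Finsupp.single (1 : Fin 2) 1)
      (fq (k := k)) = 0 := by
    rw [fq_monomials, coeff_sub, coeff_monomial, coeff_monomial, if_neg, if_neg, sub_zero]
    · intro h
      have := DFunLike.congr_fun h (0 : Fin 2)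
      simp [Finsupp.single_apply] at this
    · intro h
      have := DFunLike.congr_fun h (0 : Fin 2)
      simp [Finsupp.single_apply] at this
  have hc : coeff (Finsupp.single (0 : Fin 2) 2 + Finsupp.single (1 : Fin 2) 2)
      (fq (k := k)) = 0 := by
    rw [fq_monomials, coeff_sub, coeff_monomial, coeff_monomial, if_neg, if_neg, sub_zero]
    · intro h
      have := DFunLike.congr_fun h (0 : Fin 2)
      simp [Finsupp.single_apply] at this
    · intro h
      have := DFunLike.congr_fun h (0 : Fin 2)
      simp [Finsupp.single_apply] at this
  have he : coeff (Finsupp.single (1 : Fin 2) 4) (fq (k := k)) = 0 := by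
    rw [fq_monomials, coeff_sub, coeff_monomial, coeff_monomial, if_neg, if_neg, sub_zero]
    · intro h
      have := DFunLike.congr_fun h (0 : Fin 2)
      simp [Finsupp.single_apply] at this
    · intro h
      have := DFunLike.congr_fun h (0 : Fin 2)
      simp [Finsupp.single_apply] at this
  rw [quarticQ, he, hb, hc]
  ring

end Stmt1Aux

open Stmt1Aux in
/-- Over an algebraically closed field of characteristic `p ≥ 5`, there is a
nonzero singular binary quartic form `f` whose line stabilizer in `GL₂(k)`, taken modulo the
nonzero scalar matrices, is isomorphic to the alternating group on `4` letters.  The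
isomorphism is expressed by a map `φ` which is multiplicative on the stabilizer, surjective
onto `Alt₄`, and which kills a stabilizer element exactly when it is a scalar matrix. -/
theorem stmt1 (k : Type*) [Field k] [IsAlgClosed k] (p : ℕ) [CharP k p] (hp : 5 ≤ p) :
    ∃ f : MvPolynomial (Fin 2) k, f.IsHomogeneous 4 ∧ f ≠ 0 ∧ quarticQ f = 0 ∧
      ∃ φ : Matrix.GeneralLinearGroup (Fin 2) k → alternatingGroup (Fin 4),
        (∀ g h, g ∈ lineStabSet f → h ∈ lineStabSet f → φ (g * h) = φ g * φ h) ∧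
        (∀ σ : alternatingGroup (Fin 4), ∃ g ∈ lineStabSet f, φ g = σ) ∧
        (∀ g ∈ lineStabSet f,
          (φ g = 1 ↔ ∃ c : kˣ, (↑g : Matrix (Fin 2) (Fin 2) k) = (c : k) • 1)) := by
  classical
  have hp' : p.Prime := (CharP.char_is_prime_or_zero k p).resolve_right (by omega)
  have h3 : (3 : k) ≠ 0 := by
    intro h
    have hdvd := (CharP.cast_eq_zero_iff k p 3).1 (by exact_mod_cast h)
    have := Nat.le_of_dvd (by norm_num) hdvd
    omega
  obtain ⟨ω, hωroot⟩ := IsAlgClosed.exists_root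
    (Polynomial.X ^ 2 + Polynomial.X + Polynomial.C (1 : k)) (by
      have hdeg : (Polynomial.X ^ 2 + Polynomial.X + Polynomial.C (1 : k)).degree = 2 := by
        compute_degree!
      rw [hdeg]
      decide)
  have hω : ω ^ 2 + ω + 1 = 0 := by
    have := hωroot
    simp only [Polynomial.IsRoot, Polynomial.eval_add, Polynomial.eval_pow,
      Polynomial.eval_X, Polynomial.eval_C] at this
    exact this
  refine ⟨fq, fq_homog, fq_ne_zero, fq_quarticQ, ?_⟩
  set φ : Matrix.GeneralLinearGroup (Fin 2) k → alternatingGroup (Fin 4) := fun g =>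
    if h : ∃ σ : alternatingGroup (Fin 4),
        Realizes ω (↑g : Matrix (Fin 2) (Fin 2) k) (↑σ : Equiv.Perm (Fin 4)) then
      h.choose else 1 with hφ
  have spec : ∀ g ∈ lineStabSet (fq (k := k)),
      Realizes ω (↑g : Matrix (Fin 2) (Fin 2) k) (↑(φ g) : Equiv.Perm (Fin 4)) := by
    intro g hg
    obtain ⟨σ, hσ⟩ := exists_perm_of_stab hω g h3 hg
    have hsign := stab_even hω h3 g hg hσ
    have hex : ∃ τ : alternatingGroup (Fin 4),
        Realizes ω (↑g : Matrix (Fin 2) (Fin 2) k) (↑τ : Equiv.Perm (Fin 4)) :=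
      ⟨⟨σ, Equiv.Perm.mem_alternatingGroup.2 hsign⟩, hσ⟩
    have : φ g = hex.choose := by rw [hφ]; simp only [dif_pos hex]
    rw [this]
    exact hex.choose_spec
  have uniq : ∀ g ∈ lineStabSet (fq (k := k)), ∀ τ : alternatingGroup (Fin 4),
      Realizes ω (↑g : Matrix (Fin 2) (Fin 2) k) (↑τ : Equiv.Perm (Fin 4)) → φ g = τ := by
    intro g hg τ hτ
    exact Subtype.ext (realizes_unique hω h3 (spec g hg) hτ)
  refine ⟨φ, ?_, ?_, ?_⟩
  · intro g h hg hh
    apply uniq _ (stab_mul hg hh)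
    have hmul := realizes_mul (spec g hg) (spec h hh)
    rw [show ((↑(φ g * φ h) : Equiv.Perm (Fin 4))) =
      (↑(φ g) : Equiv.Perm (Fin 4)) * (↑(φ h) : Equiv.Perm (Fin 4)) from rfl]
    exact hmul
  · intro σ
    have hsign : Equiv.Perm.sign (σ : Equiv.Perm (Fin 4)) = 1 :=
      Equiv.Perm.mem_alternatingGroup.1 σ.2
    obtain ⟨g, hg, hre⟩ := good_even hω h3 _ hsign
    exact ⟨g, hg, uniq g hg σ hre⟩
  · intro g hg
    constructor
    · intro h1
      have hsp := spec g hg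
      rw [h1] at hsp
      exact realizes_one_scalar hω h3 g (by simpa using hsp)
    · rintro ⟨c, hc⟩
      apply uniq g hg 1
      have hrs := realizes_scalar (ω := ω) c
      rw [← hc] at hrs
      simpa using hrs
end

section
/- Let G be a group acting on the right on a set S, let σ : G → G be a group homomorphism, and let σ : S → S be a map satisfying (s·h)^σ = s^σ · h^σ for all s ∈ S and h ∈ G. Fix v ∈ S and g ∈ G, and set w = v·g. Then the map h ↦ g h g⁻¹ is an injective map from {h ∈ G : σ(h) = h and w·h = w} into {y ∈ G : v·y = v and y⁻¹ · (g·σ(g)⁻¹) · σ(y) = g·σ(g)⁻¹}. In particular the cardinality of the first set is at most that of the second. -/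
/-! If `h` fixes `w = v·g` then `g h g⁻¹` fixes `v`; if moreover `σ h = h`, then
`σ (g h g⁻¹) = σ(g) h σ(g)⁻¹`, so `g h g⁻¹` commutes past `g σ(g)⁻¹` in the twisted sense.
Conjugation by `g` is injective, which gives the cardinality bound. -/

lemma act_conj_eq_self_of_act_eq_self {G S : Type*} [Group G] (act : S → G → S)
    (h_one : ∀ s, act s 1 = s)
    (h_mul : ∀ (s : S) (g₁ g₂ : G), act s (g₁ * g₂) = act (act s g₁) g₂)
    {v : S} {g h : G} (hh : act (act v g) h = act v g) :
    act v (g * h * g⁻¹) = v := by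
  rw [h_mul, h_mul, hh, ← h_mul, mul_inv_cancel, h_one]

lemma conj_inv_mul_mul_map_conj_eq_of_map_eq_self {G : Type*} [Group G] (σ : G →* G) {h : G}
    (hσ : σ h = h) (g : G) :
    (g * h * g⁻¹)⁻¹ * (g * (σ g)⁻¹) * σ (g * h * g⁻¹) = g * (σ g)⁻¹ := by
  simp only [map_mul, map_inv, hσ]
  group

theorem stmt3_general {G S : Type*} [Group G] (act : S → G → S)
    (h_one : ∀ s, act s 1 = s)
    (h_mul : ∀ (s : S) (g₁ g₂ : G), act s (g₁ * g₂) = act (act s g₁) g₂)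
    (σG : G →* G)
    (v : S) (g : G) (w : S) (hw : w = act v g) :
    Set.MapsTo (fun h => g * h * g⁻¹)
        {h : G | σG h = h ∧ act w h = w}
        {y : G | act v y = v ∧ y⁻¹ * (g * (σG g)⁻¹) * σG y = g * (σG g)⁻¹} ∧
    Set.InjOn (fun h => g * h * g⁻¹) {h : G | σG h = h ∧ act w h = w} ∧
    Cardinal.mk {h : G | σG h = h ∧ act w h = w} ≤
      Cardinal.mk {y : G | act v y = v ∧ y⁻¹ * (g * (σG g)⁻¹) * σG y = g * (σG g)⁻¹} := by
  subst hw
  have hmaps : Set.MapsTo (fun h => g * h * g⁻¹)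
      {h : G | σG h = h ∧ act (act v g) h = act v g}
      {y : G | act v y = v ∧ y⁻¹ * (g * (σG g)⁻¹) * σG y = g * (σG g)⁻¹} :=
    fun _ ⟨hσ, hfix⟩ => ⟨act_conj_eq_self_of_act_eq_self act h_one h_mul hfix,
      conj_inv_mul_mul_map_conj_eq_of_map_eq_self σG hσ g⟩
  have hinj : Set.InjOn (fun h => g * h * g⁻¹) {h : G | σG h = h ∧ act (act v g) h = act v g} :=
    (MulAut.conj g).injective.injOn
  exact ⟨hmaps, hinj, Cardinal.mk_le_of_injective (hmaps.restrict_inj.mpr hinj)⟩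

/-- Let `G` be a group acting on the right on a set `S`, `σG : G → G` a group
homomorphism and `σS : S → S` a compatible map, i.e. `(s·h)^σ = s^σ·h^σ`.  Fix `v ∈ S`, `g ∈ G`
and set `w = v·g`.  Then `h ↦ g h g⁻¹` maps the set
`{h ∈ G : σ(h) = h ∧ w·h = w}` injectively into
`{y ∈ G : v·y = v ∧ y⁻¹(g σ(g)⁻¹)σ(y) = g σ(g)⁻¹}`; in particular the cardinality of the first
set is at most that of the second. -/
theorem stmt3 {G S : Type*} [Group G] (act : S → G → S)
    (h_one : ∀ s, act s 1 = s)
    (h_mul : ∀ (s : S) (g₁ g₂ : G), act s (g₁ * g₂) = act (act s g₁) g₂)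
    (σG : G →* G) (σS : S → S)
    (hcomp : ∀ (s : S) (h : G), σS (act s h) = act (σS s) (σG h))
    (v : S) (g : G) (w : S) (hw : w = act v g) :
    Set.MapsTo (fun h => g * h * g⁻¹)
        {h : G | σG h = h ∧ act w h = w}
        {y : G | act v y = v ∧ y⁻¹ * (g * (σG g)⁻¹) * σG y = g * (σG g)⁻¹} ∧
    Set.InjOn (fun h => g * h * g⁻¹) {h : G | σG h = h ∧ act w h = w} ∧
    Cardinal.mk {h : G | σG h = h ∧ act w h = w} ≤
      Cardinal.mk {y : G | act v y = v ∧ y⁻¹ * (g * (σG g)⁻¹) * σG y = g * (σG g)⁻¹} :=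
  stmt3_general act h_one h_mul σG v g w hw
end

section
/- Let G be a group acting on the left on two sets Ω and P. Fix x ∈ Ω and α ∈ P, let S = Stab_G(x), H = Stab_G(α), and let Λ ⊆ G·x be an H-invariant subset. Define A = {g⁻¹·α : g ∈ G, g·x ∈ Λ}. Let S′ be a subgroup of S. If S′ has finitely many orbits on A, then H has finitely many orbits on Λ. -/
/-!
Send `a = g⁻¹ • α ∈ A` (with `g • x ∈ Λ`) to the `H`-orbit of `g • x`. If `s • g⁻¹ • α = g'⁻¹ • α`
with `s • x = x`, then `g' * s * g⁻¹` fixes `α` and carries `g • x` to `g' • x`; so this is a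
well-defined map from the `S′`-orbits on `A` onto the `H`-orbits on `Λ`.
-/

theorem Quot.finite_of_biTotal {α β : Type*} {r : α → α → Prop} {r' : β → β → Prop}
    (hfin : Finite (Quot r)) (R : α → β → Prop) (hr : ∀ a, r a a)
    (hR : Relator.BiTotal R)
    (hcompat : ∀ ⦃a a' b b'⦄, R a b → R a' b' → r a a' → r' b b') :
    Finite (Quot r') := by
  choose f hf using hR.1
  let F : Quot r → Quot r' :=
    Quot.lift (fun a => Quot.mk r' (f a)) fun a a' h => Quot.sound (hcompat (hf a) (hf a') h)
  refine Finite.of_surjective F (Quot.ind fun b => ?_)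
  obtain ⟨a, hab⟩ := hR.2 b
  exact ⟨Quot.mk r a, Quot.sound (hcompat (hf a) hab (hr a))⟩

namespace MulAction

variable {G Ω P : Type*} [Group G] [MulAction G Ω] [MulAction G P]

theorem exists_mem_stabilizer_smul_eq_of_smul_inv_smul_eq {x : Ω} {α : P} {g g' s : G}
    (hs : s • x = x) (hsα : s • g⁻¹ • α = g'⁻¹ • α) :
    ∃ h ∈ stabilizer G α, h • g • x = g' • x := by
  refine ⟨g' * s * g⁻¹, ?_, ?_⟩
  · rw [mem_stabilizer_iff, mul_smul, mul_smul, hsα, smul_inv_smul]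
  · rw [mul_smul, mul_smul, inv_smul_smul, hs]

end MulAction

open MulAction in
theorem stmt5_general {G Ω P : Type*} [Group G] [MulAction G Ω] [MulAction G P]
    (x : Ω) (α : P) (Λ : Set Ω) (hΛo : Λ ⊆ MulAction.orbit G x)
    (S' : Subgroup G) (hS' : S' ≤ MulAction.stabilizer G x)
    (A : Set P) (hA : A = {b : P | ∃ g : G, g • x ∈ Λ ∧ b = g⁻¹ • α})
    (hfin : Finite (Quot (fun a a' : A => ∃ s ∈ S', s • (a : P) = (a' : P)))) :
    Finite (Quot (fun y y' : Λ =>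
      ∃ h ∈ MulAction.stabilizer G α, h • (y : Ω) = (y' : Ω))) := by
  subst hA
  refine Quot.finite_of_biTotal hfin
    (fun (a : {b : P | ∃ g : G, g • x ∈ Λ ∧ b = g⁻¹ • α}) (y : Λ) =>
      ∃ g : G, g • x = y ∧ (a : P) = g⁻¹ • α)
    (fun _ => ⟨1, S'.one_mem, one_smul G _⟩) ⟨?_, ?_⟩ ?_
  · rintro ⟨a, g, hg, rfl⟩
    exact ⟨⟨g • x, hg⟩, g, rfl, rfl⟩
  · rintro ⟨y, hy⟩
    obtain ⟨g, rfl⟩ := hΛo hy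
    exact ⟨⟨g⁻¹ • α, g, hy, rfl⟩, g, rfl, rfl⟩
  · rintro a a' y y' ⟨g, hy, ha⟩ ⟨g', hy', ha'⟩ ⟨s, hs, hsa⟩
    rw [ha, ha'] at hsa
    rw [← hy, ← hy']
    exact exists_mem_stabilizer_smul_eq_of_smul_inv_smul_eq (hS' hs) hsa

/-- Let `G` act on two sets `Ω` and `P`, `S = Stab_G(x)`, `H = Stab_G(α)`,
`Λ ⊆ G·x` an `H`-invariant subset, `A = {g⁻¹·α : g ∈ G, g·x ∈ Λ}`, and `S′ ≤ S` a subgroup.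
If `S′` has finitely many orbits on `A`, then `H` has finitely many orbits on `Λ`. -/
theorem stmt5 {G Ω P : Type*} [Group G] [MulAction G Ω] [MulAction G P]
    (x : Ω) (α : P) (Λ : Set Ω) (hΛo : Λ ⊆ MulAction.orbit G x)
    (hΛinv : ∀ h ∈ MulAction.stabilizer G α, ∀ y ∈ Λ, h • y ∈ Λ)
    (S' : Subgroup G) (hS' : S' ≤ MulAction.stabilizer G x)
    (A : Set P) (hA : A = {b : P | ∃ g : G, g • x ∈ Λ ∧ b = g⁻¹ • α})
    (hfin : Finite (Quot (fun a a' : A => ∃ s ∈ S', s • (a : P) = (a' : P)))) :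
    Finite (Quot (fun y y' : Λ =>
      ∃ h ∈ MulAction.stabilizer G α, h • (y : Ω) = (y' : Ω))) :=
  stmt5_general x α Λ hΛo S' hS' A hA hfin
end

section
/- Let k be an algebraically closed field of characteristic 2, let a ∈ k satisfy a² + a + 1 = 0, and let D = diag(0, 1, a, 1+a) ∈ M₄(k). Let S = {h ∈ SL₄(k) : there exist λ ∈ k with λ ≠ 0 and α ∈ k such that h⁻¹ D h = λD + αI}. Then: (i) T := S ∩ {diagonal matrices} equals the full group of diagonal matrices of determinant 1 in SL₄(k); (ii) T is a normal subgroup of S; and (iii) the quotient S/T is isomorphic to the alternating group on 4 letters. -/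
/-- The diagonal matrix `D = diag(0, 1, a, 1+a)`. -/
def dMat {k : Type*} [Field k] (a : k) : Matrix (Fin 4) (Fin 4) k :=
  Matrix.diagonal ![0, 1, a, 1 + a]

/-- The stabilizer in `SL₄(k)` of the line spanned by the image of `D` in `sl₄(k)/⟨I⟩`
under the conjugation action:
`S = {h ∈ SL₄(k) : h⁻¹ D h = λD + αI for some λ ≠ 0, α}`. -/
def stabSetD {k : Type*} [Field k] (a : k) :
    Set (Matrix.SpecialLinearGroup (Fin 4) k) :=
  {h | ∃ l : k, l ≠ 0 ∧ ∃ α : k,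
    (↑(h⁻¹) : Matrix (Fin 4) (Fin 4) k) * dMat a * (↑h : Matrix (Fin 4) (Fin 4) k)
      = l • dMat a + α • 1}

set_option linter.unusedSectionVars false
set_option linter.unusedVariables false

namespace Stmt7

open Matrix Equiv

variable {k : Type*} [Field k]


def Fv (a : k) : Fin 4 → k := ![0, 1, a, 1 + a]

open scoped Classical in
noncomputable def idx (a x : k) : Fin 4 :=
  if x = 1 then 1 else if x = a then 2 else if x = 1 + a then 3 else 0


lemma perm_eq_of : ∀ ρ₁ ρ₂ : Equiv.Perm (Fin 4), Equiv.Perm.sign ρ₁ = 1 →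
    Equiv.Perm.sign ρ₂ = 1 → ρ₁ 0 = ρ₂ 0 → ρ₁ 1 = ρ₂ 1 → ∀ i, ρ₁ i = ρ₂ i := by decide

lemma invol_sign : ∀ ρ : Equiv.Perm (Fin 4), ρ * ρ = 1 → (∀ i, ρ i ≠ i) →
    Equiv.Perm.sign ρ = 1 := by decide


section CharTwoFacts

variable [CharP k 2] {a : k} (ha : a ^ 2 + a + 1 = 0)

lemma hself (x : k) : x + x = 0 := CharTwo.add_self_eq_zero x

include ha

lemma hmul : a * a = 1 + a := by
  linear_combination ha - hself (1:k) - hself a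

lemma ha0 : a ≠ 0 := by rintro rfl; simp at ha

lemma ha1 : a ≠ 1 := by
  rintro rfl
  rw [one_pow, hself (1:k)] at ha
  simp at ha

lemma h1a0 : (1 : k) + a ≠ 0 := by
  intro h
  exact ha1 ha (by linear_combination h - hself (1:k))

lemma h1a1 : (1 : k) + a ≠ 1 := by
  intro h
  exact ha0 ha (by linear_combination h)

lemma h1aa : (1 : k) + a ≠ a := by
  intro h
  have : (1:k) = 0 := by linear_combination h
  simp at this

lemma idx_Fv (j : Fin 4) : idx a (Fv a j) = j := by
  fin_cases j
  · show idx a 0 = 0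
    rw [idx, if_neg (fun h => one_ne_zero h.symm),
      if_neg (fun h => ha0 ha h.symm), if_neg (fun h => h1a0 ha h.symm)]
  · show idx a 1 = 1
    rw [idx, if_pos rfl]
  · show idx a a = 2
    rw [idx, if_neg (ha1 ha), if_pos rfl]
  · show idx a (1 + a) = 3
    rw [idx, if_neg (h1a1 ha), if_neg (h1aa ha), if_pos rfl]

lemma Fv_inj : Function.Injective (Fv a) :=
  Function.LeftInverse.injective (g := idx a) (idx_Fv ha)

lemma mem_add (i j : Fin 4) : ∃ l, Fv a l = Fv a i + Fv a j := by
  fin_cases i <;> fin_cases j <;>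
    [exact ⟨0, show (0:k) = 0 + 0 by ring⟩;
     exact ⟨1, show (1:k) = 0 + 1 by ring⟩;
     exact ⟨2, show a = 0 + a by ring⟩;
     exact ⟨3, show 1 + a = 0 + (1 + a) by ring⟩;
     exact ⟨1, show (1:k) = 1 + 0 by ring⟩;
     exact ⟨0, show (0:k) = 1 + 1 by linear_combination - hself (1:k)⟩;
     exact ⟨3, show 1 + a = 1 + a by ring⟩;
     exact ⟨2, show a = 1 + (1 + a) by linear_combination - hself (1:k)⟩;
     exact ⟨2, show a = a + 0 by ring⟩;
     exact ⟨3, show 1 + a = a + 1 by ring⟩;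
     exact ⟨0, show (0:k) = a + a by linear_combination - hself a⟩;
     exact ⟨1, show (1:k) = a + (1 + a) by linear_combination - hself a⟩;
     exact ⟨3, show 1 + a = (1 + a) + 0 by ring⟩;
     exact ⟨2, show a = (1 + a) + 1 by linear_combination - hself (1:k)⟩;
     exact ⟨1, show (1:k) = (1 + a) + a by linear_combination - hself a⟩;
     exact ⟨0, show (0:k) = (1 + a) + (1 + a) by linear_combination - hself (1:k) - hself a⟩]

lemma mem_mul (i j : Fin 4) : ∃ l, Fv a l = Fv a i * Fv a j := by
  have hm := hmul ha
  fin_cases i <;> fin_cases j <;>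
    [exact ⟨0, show (0:k) = 0 * 0 by ring⟩;
     exact ⟨0, show (0:k) = 0 * 1 by ring⟩;
     exact ⟨0, show (0:k) = 0 * a by ring⟩;
     exact ⟨0, show (0:k) = 0 * (1 + a) by ring⟩;
     exact ⟨0, show (0:k) = 1 * 0 by ring⟩;
     exact ⟨1, show (1:k) = 1 * 1 by ring⟩;
     exact ⟨2, show a = 1 * a by ring⟩;
     exact ⟨3, show 1 + a = 1 * (1 + a) by ring⟩;
     exact ⟨0, show (0:k) = a * 0 by ring⟩;
     exact ⟨2, show a = a * 1 by ring⟩;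
     exact ⟨3, show 1 + a = a * a by linear_combination - hm⟩;
     exact ⟨1, show (1:k) = a * (1 + a) by linear_combination - hm - hself a⟩;
     exact ⟨0, show (0:k) = (1 + a) * 0 by ring⟩;
     exact ⟨3, show 1 + a = (1 + a) * 1 by ring⟩;
     exact ⟨1, show (1:k) = (1 + a) * a by linear_combination - hm - hself a⟩;
     exact ⟨2, show a = (1 + a) * (1 + a) by linear_combination - hm - hself (1:k) - hself a⟩]

lemma cube {x : k} (hx : ∃ i, Fv a i = x) (hx0 : x ≠ 0) : x ^ 3 = 1 := by
  obtain ⟨i, rfl⟩ := hx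
  have hm := hmul ha
  fin_cases i
  · exact absurd rfl hx0
  · show (1:k) ^ 3 = 1; ring
  · show a ^ 3 = 1
    linear_combination (a + 1) * hm + hself a
  · show (1 + a) ^ 3 = 1
    linear_combination a * hm + 2 * hself (a ^ 2) + 2 * hself a


end CharTwoFacts

section PermSec

variable [CharP k 2] {a : k} (ha : a ^ 2 + a + 1 = 0)

include ha

lemma affine_perm0 {l α : k} (hl : ∃ i, Fv a i = l) (hl0 : l ≠ 0) (hα : ∃ i, Fv a i = α) :
    ∃ σ : Equiv.Perm (Fin 4), ∀ i, Fv a (σ i) = l * Fv a i + α := by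
  have hfun : ∀ i : Fin 4, ∃ j, Fv a j = l * Fv a i + α := by
    intro i
    obtain ⟨il, rfl⟩ := hl; obtain ⟨iα, rfl⟩ := hα
    obtain ⟨m, hm⟩ := mem_mul ha il i
    obtain ⟨s, hs⟩ := mem_add ha m iα
    exact ⟨s, by rw [hs, hm]⟩
  set f : Fin 4 → Fin 4 := fun i => (hfun i).choose with hf
  have hfF : ∀ i, Fv a (f i) = l * Fv a i + α := fun i => (hfun i).choose_spec
  have hinj : Function.Injective f := by
    intro i j hij
    have h1 : l * Fv a i + α = l * Fv a j + α := by rw [← hfF i, ← hfF j, hij]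
    exact Fv_inj ha (mul_left_cancel₀ hl0 (add_right_cancel h1))
  exact ⟨Equiv.ofBijective f (Finite.injective_iff_bijective.mp hinj), hfF⟩


lemma affine_perm {l α : k} (hl : ∃ i, Fv a i = l) (hl0 : l ≠ 0) (hα : ∃ i, Fv a i = α) :
    ∃ σ : Equiv.Perm (Fin 4), (∀ i, Fv a (σ i) = l * Fv a i + α) ∧
      σ ∈ alternatingGroup (Fin 4) := by
  obtain ⟨σ, hσ⟩ := affine_perm0 ha hl hl0 hα
  obtain ⟨σ₀, hσ₀⟩ := affine_perm0 ha hl hl0 ⟨0, rfl⟩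
  obtain ⟨σ₁, hσ₁⟩ := affine_perm0 ha ⟨1, rfl⟩ one_ne_zero hα
  have hFv0 : Fv a 0 = 0 := rfl
  have hFv1 : Fv a 1 = 1 := rfl
  simp only [hFv0, add_zero] at hσ₀
  simp only [hFv1, one_mul] at hσ₁
  have hcomp : σ = σ₁ * σ₀ := by
    apply Equiv.ext; intro i
    apply Fv_inj ha
    rw [hσ i, Equiv.Perm.mul_apply, hσ₁, hσ₀]
  have s0 : Equiv.Perm.sign σ₀ = 1 := by
    have hc : l ^ 3 = 1 := cube ha hl hl0
    have key : ∀ i, σ₀ (σ₀ (σ₀ i)) = i := by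
      intro i
      apply Fv_inj ha
      rw [hσ₀, hσ₀, hσ₀]
      linear_combination (Fv a i) * hc
    have h3 : σ₀ ^ 3 = 1 :=
      Equiv.ext fun i => by
        simpa [pow_succ, Equiv.Perm.mul_apply] using key i
    have hs3 : (Equiv.Perm.sign σ₀) ^ 3 = 1 := by
      rw [← map_pow, h3]; exact Equiv.Perm.sign_one
    rcases Int.units_eq_one_or (Equiv.Perm.sign σ₀) with h | h
    · exact h
    · exact absurd (h ▸ hs3) (by decide)
  have s1 : Equiv.Perm.sign σ₁ = 1 := by
    by_cases hα0 : α = 0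
    · have h1 : σ₁ = 1 := by
        apply Equiv.ext; intro i
        apply Fv_inj ha
        rw [hσ₁, hα0, add_zero]; rfl
      rw [h1]; exact Equiv.Perm.sign_one
    · apply invol_sign
      · apply Equiv.ext; intro i
        apply Fv_inj ha
        show Fv a (σ₁ (σ₁ i)) = Fv a i
        rw [hσ₁, hσ₁, add_assoc, hself α, add_zero]
      · intro i he
        apply hα0
        have h2 := hσ₁ i
        rw [he, left_eq_add] at h2
        exact h2
  refine ⟨σ, hσ, ?_⟩
  rw [Equiv.Perm.mem_alternatingGroup, hcomp, Equiv.Perm.sign_mul, s0, s1, one_mul]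

end PermSec

local notation "M" => Matrix (Fin 4) (Fin 4) k
local notation "SL" => Matrix.SpecialLinearGroup (Fin 4) k

def Psupp (g : Matrix.SpecialLinearGroup (Fin 4) k) (σ : Equiv.Perm (Fin 4)) : Prop :=
  ∀ i j, (↑g : Matrix (Fin 4) (Fin 4) k) j i ≠ 0 → j = σ i

open scoped Classical in
noncomputable def phi (g : Matrix.SpecialLinearGroup (Fin 4) k) : alternatingGroup (Fin 4) :=
  if hg : ∃ σ : alternatingGroup (Fin 4), Psupp g (σ : Equiv.Perm (Fin 4)) then hg.choose else 1

lemma dMat_diag (a : k) : dMat a = Matrix.diagonal (Fv a) := rfl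

lemma coe_inv_mul (h : SL) : (↑(h⁻¹) : M) * (↑h : M) = 1 := by
  rw [← Matrix.SpecialLinearGroup.coe_mul, inv_mul_cancel, Matrix.SpecialLinearGroup.coe_one]

lemma coe_mul_inv (h : SL) : (↑h : M) * (↑(h⁻¹) : M) = 1 := by
  rw [← Matrix.SpecialLinearGroup.coe_mul, mul_inv_cancel, Matrix.SpecialLinearGroup.coe_one]

lemma mem_of_comm {a : k} (h : SL) (l α : k) (hl : l ≠ 0)
    (hc : dMat a * (↑h : M) = (↑h : M) * (l • dMat a + α • 1)) : h ∈ stabSetD a := by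
  refine ⟨l, hl, α, ?_⟩
  calc (↑(h⁻¹) : M) * dMat a * (↑h : M) = (↑(h⁻¹) : M) * (dMat a * (↑h : M)) := by rw [mul_assoc]
  _ = (↑(h⁻¹) : M) * ((↑h : M) * (l • dMat a + α • 1)) := by rw [hc]
  _ = ((↑(h⁻¹) : M) * (↑h : M)) * (l • dMat a + α • 1) := by rw [mul_assoc]
  _ = l • dMat a + α • 1 := by rw [coe_inv_mul, one_mul]

lemma comm_of_mem {a : k} {h : SL} (hh : h ∈ stabSetD a) :
    ∃ l : k, l ≠ 0 ∧ ∃ α : k, dMat a * (↑h : M) = (↑h : M) * (l • dMat a + α • 1) := by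
  obtain ⟨l, hl, α, he⟩ := hh
  refine ⟨l, hl, α, ?_⟩
  calc dMat a * (↑h : M) = ((↑h : M) * (↑(h⁻¹) : M)) * dMat a * (↑h : M) := by rw [coe_mul_inv, one_mul]
  _ = (↑h : M) * ((↑(h⁻¹) : M) * dMat a * (↑h : M)) := by simp only [mul_assoc]
  _ = (↑h : M) * (l • dMat a + α • 1) := by rw [he]

lemma diag_comb (a l α : k) :
    l • dMat a + α • (1 : M) = Matrix.diagonal (fun i => l * Fv a i + α) := by
  apply Matrix.ext
  intro i j
  rw [Matrix.add_apply, Matrix.smul_apply, Matrix.smul_apply, smul_eq_mul, smul_eq_mul, dMat_diag]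
  by_cases h : i = j
  · subst h
    rw [Matrix.diagonal_apply_eq, Matrix.diagonal_apply_eq, Matrix.one_apply_eq, mul_one]
  · rw [Matrix.diagonal_apply_ne _ h, Matrix.diagonal_apply_ne _ h, Matrix.one_apply_ne h,
      mul_zero, mul_zero, add_zero]

lemma col_ne (g : SL) (i : Fin 4) : ∃ j, (↑g : M) j i ≠ 0 := by
  by_contra hc
  push_neg at hc
  have h0 : Matrix.det (↑g : M) = 0 := Matrix.det_eq_zero_of_column_eq_zero i hc
  rw [Matrix.SpecialLinearGroup.det_coe] at h0
  exact one_ne_zero h0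

lemma exists_perm_of_mem [CharP k 2] {a : k} (ha : a ^ 2 + a + 1 = 0) {g : SL}
    (hg : g ∈ stabSetD a) :
    ∃ σ : Equiv.Perm (Fin 4), σ ∈ alternatingGroup (Fin 4) ∧ Psupp g σ := by
  obtain ⟨l, hl, α, hc⟩ := comm_of_mem hg
  rw [diag_comb] at hc
  have key : ∀ i j, (↑g : M) j i ≠ 0 → Fv a j = l * Fv a i + α := by
    intro i j hne
    have h1 := congrFun (congrFun hc j) i
    rw [dMat_diag, Matrix.diagonal_mul, Matrix.mul_diagonal] at h1
    rw [mul_comm ((↑g : M) j i)] at h1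
    exact mul_right_cancel₀ hne h1
  obtain ⟨j0, hj0⟩ := col_ne g 0
  obtain ⟨j1, hj1⟩ := col_ne g 1
  have hα : Fv a j0 = α := by
    have := key 0 j0 hj0
    rwa [show Fv a (0 : Fin 4) = (0:k) from rfl, mul_zero, zero_add] at this
  have hlα : Fv a j1 = l + α := by
    have := key 1 j1 hj1
    rwa [show Fv a (1 : Fin 4) = (1:k) from rfl, mul_one] at this
  have hlmem : ∃ i, Fv a i = l := by
    obtain ⟨m, hm⟩ := mem_add ha j1 j0
    exact ⟨m, by rw [hm, hα, hlα, add_assoc, hself α, add_zero]⟩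
  obtain ⟨σ, hσF, hσA⟩ := affine_perm ha hlmem hl ⟨j0, hα⟩
  refine ⟨σ, hσA, fun i j hne => ?_⟩
  exact Fv_inj ha ((key i j hne).trans (hσF i).symm)

lemma psupp_unique (g : SL) {σ τ : Equiv.Perm (Fin 4)} (h1 : Psupp g σ) (h2 : Psupp g τ) :
    σ = τ := by
  apply Equiv.ext; intro i
  obtain ⟨j, hj⟩ := col_ne g i
  rw [← h1 i j hj, ← h2 i j hj]

lemma phi_eq (g : SL) {σ : Equiv.Perm (Fin 4)} (hσ : σ ∈ alternatingGroup (Fin 4))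
    (hP : Psupp g σ) : phi g = ⟨σ, hσ⟩ := by
  have hex : ∃ τ : alternatingGroup (Fin 4), Psupp g (τ : Equiv.Perm (Fin 4)) := ⟨⟨σ, hσ⟩, hP⟩
  rw [phi, dif_pos hex]
  exact Subtype.ext (psupp_unique g hex.choose_spec hP)

lemma stab_mul_mem {a : k} {g h : SL} (hg : g ∈ stabSetD a) (hh : h ∈ stabSetD a) :
    g * h ∈ stabSetD a := by
  obtain ⟨l1, hl1, α1, hc1⟩ := comm_of_mem hg
  obtain ⟨l2, hl2, α2, hc2⟩ := comm_of_mem hh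
  apply mem_of_comm (g * h) (l1 * l2) (l1 * α2 + α1) (mul_ne_zero hl1 hl2)
  rw [Matrix.SpecialLinearGroup.coe_mul]
  calc dMat a * ((↑g : M) * (↑h : M)) = (dMat a * (↑g : M)) * (↑h : M) := by rw [mul_assoc]
  _ = ((↑g : M) * (l1 • dMat a + α1 • 1)) * (↑h : M) := by rw [hc1]
  _ = (↑g : M) * ((l1 • dMat a + α1 • 1) * (↑h : M)) := by rw [mul_assoc]
  _ = (↑g : M) * (l1 • (dMat a * (↑h : M)) + α1 • (↑h : M)) := by
        rw [add_mul, Matrix.smul_mul, Matrix.smul_mul, one_mul]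
  _ = (↑g : M) * (l1 • ((↑h : M) * (l2 • dMat a + α2 • 1)) + α1 • (↑h : M)) := by rw [hc2]
  _ = ((↑g : M) * (↑h : M)) * ((l1 * l2) • dMat a + (l1 * α2 + α1) • 1) := by
        simp only [mul_add, Matrix.mul_smul, smul_add, smul_smul, add_smul, mul_one, mul_assoc]
        abel

lemma stab_inv_mem [CharP k 2] {a : k} {g : SL} (hg : g ∈ stabSetD a) : g⁻¹ ∈ stabSetD a := by
  obtain ⟨l, hl, α, hc⟩ := comm_of_mem hg
  apply mem_of_comm _ l⁻¹ (l⁻¹ * α) (inv_ne_zero hl)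
  have h2 : (↑(g⁻¹) : M) * dMat a = l • (dMat a * (↑(g⁻¹) : M)) + α • (↑(g⁻¹) : M) := by
    calc (↑(g⁻¹) : M) * dMat a
        = (↑(g⁻¹) : M) * (dMat a * ((↑g : M) * (↑(g⁻¹) : M))) := by
          rw [coe_mul_inv, mul_one]
    _ = (↑(g⁻¹) : M) * ((dMat a * (↑g : M)) * (↑(g⁻¹) : M)) := by rw [mul_assoc]
    _ = (↑(g⁻¹) : M) * (((↑g : M) * (l • dMat a + α • 1)) * (↑(g⁻¹) : M)) := by rw [hc]
    _ = ((↑(g⁻¹) : M) * (↑g : M)) * ((l • dMat a + α • 1) * (↑(g⁻¹) : M)) := by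
          rw [mul_assoc, mul_assoc]
    _ = (l • dMat a + α • 1) * (↑(g⁻¹) : M) := by rw [coe_inv_mul, one_mul]
    _ = l • (dMat a * (↑(g⁻¹) : M)) + α • (↑(g⁻¹) : M) := by
          rw [add_mul, Matrix.smul_mul, Matrix.smul_mul, one_mul]
  have h3 : l • (dMat a * (↑(g⁻¹) : M)) = (↑(g⁻¹) : M) * dMat a + α • (↑(g⁻¹) : M) := by
    rw [h2, add_assoc, ← add_smul, hself α, zero_smul, add_zero]
  calc dMat a * (↑(g⁻¹) : M) = (l⁻¹ * l) • (dMat a * (↑(g⁻¹) : M)) := by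
        rw [inv_mul_cancel₀ hl, one_smul]
  _ = l⁻¹ • (l • (dMat a * (↑(g⁻¹) : M))) := by rw [smul_smul]
  _ = l⁻¹ • ((↑(g⁻¹) : M) * dMat a + α • (↑(g⁻¹) : M)) := by rw [h3]
  _ = l⁻¹ • ((↑(g⁻¹) : M) * dMat a) + (l⁻¹ * α) • (↑(g⁻¹) : M) := by rw [smul_add, smul_smul]
  _ = (↑(g⁻¹) : M) * (l⁻¹ • dMat a + (l⁻¹ * α) • 1) := by
        rw [mul_add, Matrix.mul_smul, Matrix.mul_smul, mul_one]

lemma psupp_mul {g h : SL} {σ τ : Equiv.Perm (Fin 4)} (h1 : Psupp g σ) (h2 : Psupp h τ) :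
    Psupp (g * h) (σ * τ) := by
  intro i j hne
  rw [Matrix.SpecialLinearGroup.coe_mul, Matrix.mul_apply] at hne
  obtain ⟨m, _, hm⟩ := Finset.exists_ne_zero_of_sum_ne_zero hne
  have hgm := h1 m j (left_ne_zero_of_mul hm)
  have hhm := h2 i m (right_ne_zero_of_mul hm)
  rw [Equiv.Perm.mul_apply, ← hhm, hgm]

lemma phi_mul [CharP k 2] {a : k} (ha : a ^ 2 + a + 1 = 0) {g h : SL}
    (hg : g ∈ stabSetD a) (hh : h ∈ stabSetD a) : phi (g * h) = phi g * phi h := by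
  obtain ⟨σ, hσA, hσP⟩ := exists_perm_of_mem ha hg
  obtain ⟨τ, hτA, hτP⟩ := exists_perm_of_mem ha hh
  rw [phi_eq g hσA hσP, phi_eq h hτA hτP,
    phi_eq (g * h) (mul_mem hσA hτA) (psupp_mul hσP hτP)]
  rfl

lemma phi_one_iff [CharP k 2] {a : k} (ha : a ^ 2 + a + 1 = 0) {g : SL}
    (hg : g ∈ stabSetD a) : phi g = 1 ↔ (↑g : M).IsDiag := by
  constructor
  · intro h1
    obtain ⟨σ, hσA, hσP⟩ := exists_perm_of_mem ha hg
    rw [phi_eq g hσA hσP] at h1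
    have hσ1 : σ = 1 := by
      have := Subtype.ext_iff.mp h1
      simpa using this
    intro i j hij
    by_contra hne
    exact hij (hσP j i hne ▸ (by rw [hσ1]; rfl))
  · intro hd
    have hP : Psupp g 1 := by
      intro i j hne
      by_contra hji
      exact hne (hd hji)
    rw [phi_eq g (one_mem _) hP]
    rfl

lemma diag_mem {a : k} {g : SL} (hd : (↑g : M).IsDiag) : g ∈ stabSetD a := by
  apply mem_of_comm g 1 0 one_ne_zero
  rw [one_smul, zero_smul, add_zero]
  apply Matrix.ext
  intro j i
  rw [dMat_diag, Matrix.diagonal_mul, Matrix.mul_diagonal]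
  by_cases hij : j = i
  · subst hij; exact mul_comm _ _
  · rw [hd hij, mul_zero, zero_mul]

lemma phi_surj [CharP k 2] {a : k} (ha : a ^ 2 + a + 1 = 0) (σ' : alternatingGroup (Fin 4)) :
    ∃ g ∈ stabSetD a, phi g = σ' := by
  set σ := (σ' : Equiv.Perm (Fin 4)) with hσdef
  set α := Fv a (σ 0) with hαdef
  set l := Fv a (σ 1) + Fv a (σ 0) with hldef
  have hl0 : l ≠ 0 := by
    intro h
    have h1 : Fv a (σ 1) = Fv a (σ 0) := by
      have h2 : Fv a (σ 1) + (Fv a (σ 0) + Fv a (σ 0)) = Fv a (σ 0) := by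
        rw [← add_assoc, ← hldef, h, zero_add]
      rwa [hself, add_zero] at h2
    have := σ.injective (Fv_inj ha h1)
    exact absurd this (by decide)
  have hlmem : ∃ i, Fv a i = l := mem_add ha (σ 1) (σ 0)
  obtain ⟨τ, hτF, hτA⟩ := affine_perm ha hlmem hl0 ⟨σ 0, rfl⟩
  have ht0 : τ 0 = σ 0 := by
    apply Fv_inj ha
    rw [hτF 0, show Fv a (0 : Fin 4) = (0:k) from rfl, mul_zero, zero_add]
  have ht1 : τ 1 = σ 1 := by
    apply Fv_inj ha
    rw [hτF 1, show Fv a (1 : Fin 4) = (1:k) from rfl, mul_one, hldef,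
      add_assoc, hself, add_zero]
  have hτσ : τ = σ := by
    apply Equiv.ext
    exact perm_eq_of τ σ (Equiv.Perm.mem_alternatingGroup.mp hτA)
      (Equiv.Perm.mem_alternatingGroup.mp σ'.prop) ht0 ht1
  have hdet : Matrix.det ((τ⁻¹).permMatrix k) = 1 := by
    rw [Matrix.det_permutation, map_inv, Equiv.Perm.mem_alternatingGroup.mp hτA]
    simp
  refine ⟨⟨(τ⁻¹).permMatrix k, hdet⟩, ?_, ?_⟩
  · apply mem_of_comm _ l α hl0
    rw [diag_comb]
    apply Matrix.ext
    intro j i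
    rw [dMat_diag, Matrix.diagonal_mul, Matrix.mul_diagonal]
    show Fv a j * (τ⁻¹).permMatrix k j i = (τ⁻¹).permMatrix k j i * (l * Fv a i + α)
    rw [← hτF i]
    by_cases hji : j = τ i
    · subst hji; exact mul_comm _ _
    · have hz : (τ⁻¹).permMatrix k j i = 0 := by
        rw [Equiv.Perm.permMatrix, PEquiv.toMatrix_apply, Equiv.toPEquiv_apply, if_neg]
        simp only [Option.mem_def, Option.some_inj]
        intro h
        exact hji (by rw [← h]; simp)
      rw [hz, mul_zero, zero_mul]
  · have hP : Psupp ⟨(τ⁻¹).permMatrix k, hdet⟩ τ := by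
      intro i j hne
      by_contra hji
      apply hne
      show (τ⁻¹).permMatrix k j i = 0
      rw [Equiv.Perm.permMatrix, PEquiv.toMatrix_apply, Equiv.toPEquiv_apply, if_neg]
      simp only [Option.mem_def, Option.some_inj]
      intro h
      exact hji (by rw [← h]; simp)
    rw [phi_eq _ hτA hP]
    exact Subtype.ext hτσ


lemma phi_one : phi (1 : Matrix.SpecialLinearGroup (Fin 4) k) = 1 := by
  have hP : Psupp (1 : Matrix.SpecialLinearGroup (Fin 4) k) 1 := by
    intro i j hne
    by_contra hji
    rw [Matrix.SpecialLinearGroup.coe_one] at hne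
    exact hne (Matrix.one_apply_ne hji)
  rw [phi_eq _ (one_mem _) hP]
  rfl


end Stmt7

/-- Let `k` be algebraically closed of characteristic `2`, `a² + a + 1 = 0`,
`D = diag(0,1,a,1+a)` and `S` the stabilizer above.  Then (i) `T := S ∩ {diagonals}` is the
full group of diagonal determinant-one matrices; (ii) `T` is normal in `S`; (iii) `S/T` is
isomorphic to the alternating group on 4 letters (expressed by the existence of a map `φ`
which is multiplicative on `S`, surjective onto `Alt₄`, and whose "kernel" in `S` is
exactly `T`). -/
theorem stmt7 (k : Type*) [Field k] [IsAlgClosed k] [CharP k 2]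
    (a : k) (ha : a ^ 2 + a + 1 = 0) :
    ({h : Matrix.SpecialLinearGroup (Fin 4) k |
        h ∈ stabSetD a ∧ (↑h : Matrix (Fin 4) (Fin 4) k).IsDiag}
      = {h : Matrix.SpecialLinearGroup (Fin 4) k |
        (↑h : Matrix (Fin 4) (Fin 4) k).IsDiag}) ∧
    (∀ g ∈ stabSetD a, ∀ t : Matrix.SpecialLinearGroup (Fin 4) k,
      t ∈ stabSetD a ∧ (↑t : Matrix (Fin 4) (Fin 4) k).IsDiag →
      g * t * g⁻¹ ∈ stabSetD a ∧
        (↑(g * t * g⁻¹) : Matrix (Fin 4) (Fin 4) k).IsDiag) ∧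
    ∃ φ : Matrix.SpecialLinearGroup (Fin 4) k → alternatingGroup (Fin 4),
      (∀ g h, g ∈ stabSetD a → h ∈ stabSetD a → φ (g * h) = φ g * φ h) ∧
      (∀ σ : alternatingGroup (Fin 4), ∃ g ∈ stabSetD a, φ g = σ) ∧
      (∀ g ∈ stabSetD a,
        (φ g = 1 ↔ (↑g : Matrix (Fin 4) (Fin 4) k).IsDiag)) := by
  refine ⟨?_, ?_, ?_⟩
  · ext h
    simp only [Set.mem_setOf_eq]
    exact ⟨fun hh => hh.2, fun hd => ⟨Stmt7.diag_mem hd, hd⟩⟩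
  · rintro g hg t ⟨ht, htd⟩
    have hginv := Stmt7.stab_inv_mem hg
    have hgt := Stmt7.stab_mul_mem hg ht
    have hmem : g * t * g⁻¹ ∈ stabSetD a := Stmt7.stab_mul_mem hgt hginv
    refine ⟨hmem, ?_⟩
    rw [← Stmt7.phi_one_iff ha hmem, Stmt7.phi_mul ha hgt hginv, Stmt7.phi_mul ha hg ht,
      (Stmt7.phi_one_iff ha ht).mpr htd, mul_one, ← Stmt7.phi_mul ha hg hginv,
      mul_inv_cancel, Stmt7.phi_one]
  · exact ⟨Stmt7.phi, fun g h hg hh => Stmt7.phi_mul ha hg hh, Stmt7.phi_surj ha,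
      fun g hg => Stmt7.phi_one_iff ha hg⟩
end

section
/- Let k be an algebraically closed field with char k ≠ 2. Let s ∈ M₅(k) be nonzero and diagonalizable with sᵀ = −s and Tr(s²) = 0, and let n ∈ M₅(k) be nilpotent with nᵀ = −n and s·n = n·s. Then n = 0. -/
/-!
Conjugate `s` to `diagonal d`. Since `sᵀ = -s`, the matrices `s` and `-s` have the same
characteristic polynomial, so the eigenvalue multiset is stable under negation and its odd
elementary symmetric functions vanish; `Tr(s²) = 0` kills `e₂` as well. Hence
`∏ (X - dᵢ) = X⁵ + e₄ X` with `e₄ ≠ 0` because `s ≠ 0`: a separable polynomial, so the `dᵢ` are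
distinct. A matrix commuting with a diagonal matrix with distinct entries is diagonal, and a
nilpotent diagonal matrix is zero.
-/

open Matrix Polynomial

theorem Polynomial.separable_X_pow_five_add_C_mul_X {K : Type*} [Field K] (h2 : (2 : K) ≠ 0)
    {c : K} (hc : c ≠ 0) : (X ^ 5 + C c * X).Separable := by
  have h4 : ((4 : ℕ) : K) ≠ 0 := by
    rw [show ((4 : ℕ) : K) = 2 * 2 by norm_num]
    exact mul_ne_zero h2 h2
  rw [show X ^ 5 + C c * X = X * (X ^ 4 - C (-c)) by rw [map_neg]; ring]
  refine separable_X.mul (separable_X_pow_sub_C _ h4 (neg_ne_zero.mpr hc)) ?_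
  rw [irreducible_X.coprime_iff_not_dvd, X_dvd_iff]
  simpa using hc

namespace Multiset

section CommSemiring

variable {R : Type*} [CommSemiring R]

theorem esymm_zero (s : Multiset R) : s.esymm 0 = 1 := by
  simp [esymm, powersetCard_zero_left]

theorem esymm_one (s : Multiset R) : s.esymm 1 = s.sum := by
  simp [esymm, powersetCard_one]

theorem esymm_cons_succ (a : R) (s : Multiset R) (k : ℕ) :
    (a ::ₘ s).esymm (k + 1) = s.esymm (k + 1) + a * s.esymm k := by
  simp [esymm, powersetCard_cons, map_map, sum_map_mul_left]

end CommSemiring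

variable {R : Type*} [CommRing R]

theorem two_mul_esymm_two (s : Multiset R) :
    2 * s.esymm 2 = s.sum ^ 2 - (s.map (· ^ 2)).sum := by
  induction s using Multiset.induction with
  | empty => simp [esymm, powersetCard_zero_right 1]
  | cons a s ih =>
    rw [esymm_cons_succ, esymm_one, sum_cons, map_cons, sum_cons]
    linear_combination ih

theorem esymm_eq_zero_of_map_neg_eq [NoZeroDivisors R] (h2 : (2 : R) ≠ 0) {s : Multiset R}
    (hs : s.map Neg.neg = s) {k : ℕ} (hk : Odd k) : s.esymm k = 0 := by
  have h := esymm_neg s k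
  rw [hs, hk.neg_one_pow, neg_one_mul] at h
  exact (mul_eq_zero.mp (by linear_combination h : (2 : R) * s.esymm k = 0)).resolve_left h2

variable {K : Type*} [Field K]

theorem prod_X_sub_C_eq_X_pow_five_add (h2 : (2 : K) ≠ 0) {s : Multiset K} (hcard : card s = 5)
    (hneg : s.map Neg.neg = s) (hsq : (s.map (· ^ 2)).sum = 0) :
    (s.map fun a => X - C a).prod = X ^ 5 + C (s.esymm 4) * X := by
  have hodd : ∀ k, Odd k → s.esymm k = 0 := fun k hk => esymm_eq_zero_of_map_neg_eq h2 hneg hk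
  have he2 : s.esymm 2 = 0 := by
    have := two_mul_esymm_two s
    rw [← esymm_one, hodd 1 odd_one, hsq] at this
    simpa [h2] using this
  rw [prod_X_sub_X_eq_sum_esymm, hcard]
  norm_num [Finset.sum_range_succ, esymm_zero, hodd 1 odd_one, hodd 3 (by decide),
    hodd 5 (by decide), he2]

theorem nodup_of_card_eq_five (h2 : (2 : K) ≠ 0) {s : Multiset K} (hcard : card s = 5)
    (hneg : s.map Neg.neg = s) (hsq : (s.map (· ^ 2)).sum = 0) (hs : ∃ x ∈ s, x ≠ 0) :
    s.Nodup := by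
  have hroots : (X ^ 5 + C (s.esymm 4) * X).roots = s := by
    rw [← prod_X_sub_C_eq_X_pow_five_add h2 hcard hneg hsq, roots_multiset_prod_X_sub_C]
  have he4 : s.esymm 4 ≠ 0 := by
    intro h
    obtain ⟨x, hx, hx0⟩ := hs
    rw [h, C_0, zero_mul, add_zero, roots_X_pow] at hroots
    rw [← hroots] at hx
    exact hx0 (mem_singleton.mp (mem_of_mem_nsmul hx))
  rw [← hroots]
  exact nodup_roots (separable_X_pow_five_add_C_mul_X h2 he4)

end Multiset

namespace Matrix

variable {ι R : Type*} [Fintype ι] [DecidableEq ι] [CommRing R]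

theorem isDiag_of_commute_diagonal [NoZeroDivisors R] {d : ι → R} (hd : Function.Injective d)
    {m : Matrix ι ι R} (h : Commute (diagonal d) m) : m.IsDiag := by
  intro i j hij
  have hij' := congr_fun₂ h.eq i j
  rw [diagonal_mul, mul_diagonal] at hij'
  exact (mul_eq_zero.mp (by linear_combination hij' : (d i - d j) * m i j = 0)).resolve_left
    (sub_ne_zero.mpr (hd.ne hij))

theorem IsDiag.eq_zero_of_isNilpotent [IsReduced R] {m : Matrix ι ι R} (hm : m.IsDiag)
    (hn : IsNilpotent m) : m = 0 := by
  rw [← hm.diagonal_diag] at hn ⊢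
  obtain ⟨k, hk⟩ := hn
  rw [diagonal_pow, diagonal_eq_zero] at hk
  rw [diagonal_eq_zero]
  exact IsNilpotent.eq_zero ⟨k, hk⟩

variable {g s : Matrix ι ι R} {d : ι → R}

theorem eq_zero_of_isNilpotent_of_commute [IsDomain R] (hg : IsUnit g.det)
    (hs : g * s * g⁻¹ = diagonal d) (hd : Function.Injective d) {n : Matrix ι ι R}
    (hn : IsNilpotent n) (hsn : Commute s n) : n = 0 := by
  let conj := MulSemiringAction.toRingEquiv (ConjAct (Matrix ι ι R)ˣ) (Matrix ι ι R)
    (ConjAct.toConjAct (nonsingInvUnit g hg))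
  have hconj (x : Matrix ι ι R) : conj x = g * x * g⁻¹ := ConjAct.units_smul_def _ _
  have hdiag : (conj n).IsDiag := isDiag_of_commute_diagonal hd (by
    rw [← hs, ← hconj]; exact hsn.map conj)
  exact (map_eq_zero_iff conj conj.injective).mp (hdiag.eq_zero_of_isNilpotent (hn.map conj))

theorem ne_zero_of_conj_eq_diagonal (hg : IsUnit g.det) (hs : g * s * g⁻¹ = diagonal d)
    (hs0 : s ≠ 0) : d ≠ 0 := by
  rintro rfl
  have hs' : s = g⁻¹ * (g * s * g⁻¹) * g := by
    simp [Matrix.mul_assoc, nonsing_inv_mul_cancel_left _ _ hg, nonsing_inv_mul _ hg]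
  exact hs0 (by simpa [hs] using hs')

theorem roots_charpoly_of_conj_eq_diagonal [IsDomain R] (hg : IsUnit g.det)
    (hs : g * s * g⁻¹ = diagonal d) : s.charpoly.roots = Finset.univ.val.map d := by
  have hchar : s.charpoly = (diagonal d).charpoly := by
    rw [← hs]; exact (charpoly_units_conj (nonsingInvUnit g hg) s).symm
  rw [hchar, charpoly_diagonal, ← roots_multiset_prod_X_sub_C (Finset.univ.val.map d),
    Multiset.map_map]
  rfl

theorem trace_mul_self_of_conj_eq_diagonal (hg : IsUnit g.det) (hs : g * s * g⁻¹ = diagonal d) :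
    (s * s).trace = ∑ i, d i ^ 2 := by
  have hsq : g * (s * s) * g⁻¹ = (g * s * g⁻¹) * (g * s * g⁻¹) := by
    simp [Matrix.mul_assoc, nonsing_inv_mul_cancel_left _ _ hg]
  rw [← trace_conj ((isUnit_iff_isUnit_det g).mpr hg), hsq, hs, diagonal_mul_diagonal,
    trace_diagonal]
  simp [sq]

theorem map_neg_eq_of_transpose_eq_neg [IsDomain R] (hg : IsUnit g.det)
    (hs : g * s * g⁻¹ = diagonal d) (hskew : sᵀ = -s) :
    (Finset.univ.val.map d).map Neg.neg = Finset.univ.val.map d := by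
  have hneg : g * (-s) * g⁻¹ = diagonal (Neg.neg ∘ d) := by
    rw [Matrix.mul_neg, Matrix.neg_mul, hs, diagonal_neg]; rfl
  rw [Multiset.map_map, ← roots_charpoly_of_conj_eq_diagonal hg hneg,
    ← roots_charpoly_of_conj_eq_diagonal hg hs, ← hskew, charpoly_transpose]

end Matrix

theorem stmt10_general (k : Type*) [Field k] (h2 : (2 : k) ≠ 0)
    (s : Matrix (Fin 5) (Fin 5) k) (hs0 : s ≠ 0)
    (hdiag : ∃ g : Matrix (Fin 5) (Fin 5) k, IsUnit g.det ∧ (g * s * g⁻¹).IsDiag)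
    (hskew : sᵀ = -s) (hQ : (s * s).trace = 0)
    (n : Matrix (Fin 5) (Fin 5) k) (hnil : IsNilpotent n)
    (hcomm : s * n = n * s) :
    n = 0 := by
  obtain ⟨g, hg, hD⟩ := hdiag
  set d := (g * s * g⁻¹).diag
  have hs : g * s * g⁻¹ = diagonal d := hD.diagonal_diag.symm
  have hd : Function.Injective d := by
    rw [← Fintype.nodup_map_univ_iff_injective]
    obtain ⟨i, hi⟩ := Function.ne_iff.mp (ne_zero_of_conj_eq_diagonal hg hs hs0)
    refine Multiset.nodup_of_card_eq_five h2 (by simp)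
      (map_neg_eq_of_transpose_eq_neg hg hs hskew) ?_
      ⟨d i, Multiset.mem_map_of_mem d (Finset.mem_univ i), hi⟩
    rw [Multiset.map_map, ← hQ, trace_mul_self_of_conj_eq_diagonal hg hs]
    rfl
  exact eq_zero_of_isNilpotent_of_commute hg hs hd hnil hcomm

/-- Over an algebraically closed field of characteristic `≠ 2`, if
`s ∈ so₅(k)` (that is, `sᵀ = -s`) is nonzero, diagonalizable and satisfies `Tr(s²) = 0`,
and `n ∈ so₅(k)` is nilpotent and commutes with `s`, then `n = 0`. -/
theorem stmt10 (k : Type*) [Field k] [IsAlgClosed k] (h2 : (2 : k) ≠ 0)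
    (s : Matrix (Fin 5) (Fin 5) k) (hs0 : s ≠ 0)
    (hdiag : ∃ g : Matrix (Fin 5) (Fin 5) k, IsUnit g.det ∧ (g * s * g⁻¹).IsDiag)
    (hskew : sᵀ = -s) (hQ : (s * s).trace = 0)
    (n : Matrix (Fin 5) (Fin 5) k) (hnil : IsNilpotent n) (hnskew : nᵀ = -n)
    (hcomm : s * n = n * s) :
    n = 0 :=
  stmt10_general k h2 s hs0 hdiag hskew hQ n hnil hcomm
end

section
/- Let k be an algebraically closed field with char k ≠ 3, and let sl₃(k) = {A ∈ M₃(k) : Tr(A) = 0}, with SL₃(k) acting by conjugation. Define Q(A) = e₂(A) = Σ_{1≤i<j≤3} (A_{ii}A_{jj} − A_{ij}A_{ji}). Then SL₃(k) has only finitely many orbits on the set of singular 1-spaces in sl₃(k), i.e. on the set of lines ⟨A⟩ with 0 ≠ A ∈ sl₃(k) and Q(A) = 0. -/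
/-- The second coefficient of the characteristic polynomial: the sum of the principal
`2×2` minors of a `3×3` matrix.  This is the `SL₃`-invariant quadratic form on `sl₃`. -/
def e2Three {k : Type*} [CommRing k] (A : Matrix (Fin 3) (Fin 3) k) : k :=
  ∑ i : Fin 3, ∑ j : Fin 3, if i < j then A i i * A j j - A i j * A j i else 0

section Stmt11Aux

open scoped Matrix

variable {k : Type*} [Field k]

lemma e2Three_eq (A : Matrix (Fin 3) (Fin 3) k) :
    e2Three A = A 0 0 * A 1 1 - A 0 1 * A 1 0 + (A 0 0 * A 2 2 - A 0 2 * A 2 0)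
      + (A 1 1 * A 2 2 - A 1 2 * A 2 1) := by
  simp [e2Three, Fin.sum_univ_three]

lemma trace_eq (A : Matrix (Fin 3) (Fin 3) k) :
    A.trace = A 0 0 + A 1 1 + A 2 2 := by
  simp [Matrix.trace, Fin.sum_univ_three, Matrix.diag]

lemma ch3 (A : Matrix (Fin 3) (Fin 3) k) :
    A * A * A = A.trace • (A * A) - e2Three A • A + A.det • 1 := by
  ext i j
  fin_cases i <;> fin_cases j <;>
    simp [Matrix.mul_apply, Fin.sum_univ_three, trace_eq, e2Three_eq,
      Matrix.det_fin_three, Matrix.one_apply] <;> ring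



lemma rel_of_conj [IsAlgClosed k] {A B P : Matrix (Fin 3) (Fin 3) k} (hP : P.det ≠ 0)
    (c : kˣ) (h : A * P = P * ((c : k) • B)) :
    ∃ g : Matrix (Fin 3) (Fin 3) k, g.det = 1 ∧
      ∃ c' : kˣ, g * A * g⁻¹ = (c' : k) • B := by
  have hPu : IsUnit P.det := isUnit_iff_ne_zero.mpr hP
  obtain ⟨d, hd⟩ := IsAlgClosed.exists_pow_nat_eq P.det (by norm_num : 0 < 3)
  have hd0 : d ≠ 0 := by rintro rfl; simp at hd; exact hP hd.symm
  refine ⟨d • P⁻¹, ?_, c, ?_⟩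
  · rw [Matrix.det_smul, Matrix.det_nonsing_inv, Ring.inverse_eq_inv]
    simp only [Fintype.card_fin]
    rw [hd]
    field_simp
  · have hinv : (d • P⁻¹)⁻¹ = d⁻¹ • P := by
      apply Matrix.inv_eq_right_inv
      rw [Matrix.smul_mul, Matrix.mul_smul, Matrix.nonsing_inv_mul _ hPu, smul_smul,
        mul_inv_cancel₀ hd0, one_smul]
    rw [hinv, Matrix.smul_mul, Matrix.mul_smul, Matrix.smul_mul, smul_smul,
      inv_mul_cancel₀ hd0, one_smul, Matrix.mul_assoc, h, ← Matrix.mul_assoc,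
      Matrix.nonsing_inv_mul _ hPu, Matrix.one_mul]

lemma det_ne_zero_of (v : Fin 3 → Fin 3 → k)
    (h : ∀ x : Fin 3 → k, x 0 • v 0 + x 1 • v 1 + x 2 • v 2 = 0 → x = 0) :
    (Matrix.of fun i j => v j i).det ≠ 0 := by
  intro hdet
  obtain ⟨x, hx0, hxv⟩ := Matrix.exists_mulVec_eq_zero_iff.mpr hdet
  apply hx0
  apply h
  rw [← hxv]
  funext i
  simp [Matrix.mulVec, dotProduct, Fin.sum_univ_three]
  ring

lemma eig_exists (A : Matrix (Fin 3) (Fin 3) k) (htr : A.trace = 0)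
    (he2 : e2Three A = 0) (μ : k) (hμ : μ ^ 3 = A.det) :
    ∃ v : Fin 3 → k, v ≠ 0 ∧ A *ᵥ v = μ • v := by
  have h1 : A 0 0 + A 1 1 + A 2 2 = 0 := by rw [← trace_eq]; exact htr
  have h2 := e2Three_eq A
  rw [he2] at h2
  have hdet3 := Matrix.det_fin_three A
  rw [← hμ] at hdet3
  have hdet : (A - μ • 1).det = 0 := by
    rw [Matrix.det_fin_three]
    simp +decide only [Matrix.sub_apply, Matrix.smul_apply, Matrix.one_apply, smul_eq_mul,
      if_true, if_false]
    linear_combination -hdet3 + μ * h2 + μ ^ 2 * h1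
  obtain ⟨v, hv0, hv⟩ := Matrix.exists_mulVec_eq_zero_iff.mpr hdet
  refine ⟨v, hv0, ?_⟩
  rw [Matrix.sub_mulVec, Matrix.smul_mulVec, Matrix.one_mulVec, sub_eq_zero] at hv
  exact hv

lemma vec_ne_zero_of {w : Fin 3 → k} {i : Fin 3} (h : w i ≠ 0) : w ≠ 0 := by
  intro h0; exact h (by rw [h0]; rfl)

/-- Case `A` nilpotent with `A² ≠ 0`: conjugate to the regular nilpotent. -/
lemma caseJ3 [IsAlgClosed k] (A : Matrix (Fin 3) (Fin 3) k)
    (h3 : A * A * A = 0) (h2 : A * A ≠ 0) :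
    ∃ g : Matrix (Fin 3) (Fin 3) k, g.det = 1 ∧ ∃ c' : kˣ,
      g * A * g⁻¹ = (c' : k) • (!![0,0,0;1,0,0;0,1,0] : Matrix (Fin 3) (Fin 3) k) := by
  have hv : ∃ v : Fin 3 → k, (A * A) *ᵥ v ≠ 0 := by
    by_contra hc
    push_neg at hc
    apply h2
    ext i j
    have := congrFun (hc (Pi.single j 1)) i
    simpa [Matrix.mulVec_single] using this
  obtain ⟨v, hv⟩ := hv
  set u : Fin 3 → k := A *ᵥ v with hu
  set w : Fin 3 → k := A *ᵥ u with hwdef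
  have hwv : w = (A * A) *ᵥ v := by rw [hwdef, hu, Matrix.mulVec_mulVec]
  have hw0 : w ≠ 0 := by rw [hwv]; exact hv
  have hAw : A *ᵥ w = 0 := by
    rw [hwv, Matrix.mulVec_mulVec, ← Matrix.mul_assoc, h3, Matrix.zero_mulVec]
  have hli : ∀ x : Fin 3 → k, x 0 • v + x 1 • u + x 2 • w = 0 → x = 0 := by
    intro x hx
    have e1 : x 0 • u + x 1 • w = 0 := by
      have := congrArg (A *ᵥ ·) hx
      simpa [Matrix.mulVec_add, Matrix.mulVec_smul, ← hu, ← hwdef, hAw] using this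
    have e2 : x 0 • w = 0 := by
      have := congrArg (A *ᵥ ·) e1
      simpa [Matrix.mulVec_add, Matrix.mulVec_smul, ← hwdef, hAw] using this
    have hx0 : x 0 = 0 := by
      rcases smul_eq_zero.mp e2 with h | h
      · exact h
      · exact absurd h hw0
    rw [hx0, zero_smul, zero_add] at e1 hx
    have hx1 : x 1 = 0 := by
      rcases smul_eq_zero.mp e1 with h | h
      · exact h
      · exact absurd h hw0
    rw [hx1, zero_smul, zero_add] at hx
    have hx2 : x 2 = 0 := by
      rcases smul_eq_zero.mp hx with h | h
      · exact h
      · exact absurd h hw0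
    funext i
    fin_cases i <;> assumption
  have hdet := det_ne_zero_of ![v, u, w] (by
    intro x hx
    apply hli
    simpa using hx)
  apply rel_of_conj hdet 1
  ext i j
  have hui := congrFun hu i
  have hwi := congrFun hwdef i
  have hAwi := congrFun hAw i
  simp [Matrix.mul_apply, Matrix.mulVec, dotProduct, Fin.sum_univ_three] at hui hwi hAwi ⊢
  fin_cases j <;> simp [Fin.sum_univ_three] <;>
    first
      | linear_combination hui
      | linear_combination -hui
      | linear_combination hwi
      | linear_combination -hwi
      | linear_combination hAwi
      | linear_combination -hAwi

/-- Case `A ≠ 0` with `A² = 0`. -/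
lemma caseJ2 [IsAlgClosed k] (A : Matrix (Fin 3) (Fin 3) k)
    (h2 : A * A = 0) (h0 : A ≠ 0) :
    ∃ g : Matrix (Fin 3) (Fin 3) k, g.det = 1 ∧ ∃ c' : kˣ,
      g * A * g⁻¹ = (c' : k) • (!![0,0,0;1,0,0;0,0,0] : Matrix (Fin 3) (Fin 3) k) := by
  have hv : ∃ v : Fin 3 → k, A *ᵥ v ≠ 0 := by
    by_contra hc
    push_neg at hc
    apply h0
    ext i j
    have := congrFun (hc (Pi.single j 1)) i
    simpa [Matrix.mulVec_single] using this
  obtain ⟨v, hv⟩ := hv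
  set u : Fin 3 → k := A *ᵥ v with hu
  have hAu : A *ᵥ u = 0 := by
    rw [hu, Matrix.mulVec_mulVec, h2, Matrix.zero_mulVec]
  set f : (Fin 3 → k) →ₗ[k] (Fin 3 → k) := A.mulVecLin with hf
  have hrange : LinearMap.range f ≤ LinearMap.ker f := by
    rintro x ⟨y, rfl⟩
    simp [hf, Matrix.mulVecLin_apply, Matrix.mulVec_mulVec, h2]
  have hsum := LinearMap.finrank_range_add_finrank_ker f
  rw [Module.finrank_fin_fun] at hsum
  have hmono := Submodule.finrank_mono hrange
  have hker2 : 2 ≤ Module.finrank k (LinearMap.ker f) := by omega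
  have huker : u ∈ LinearMap.ker f := by
    rw [LinearMap.mem_ker, hf, Matrix.mulVecLin_apply]; exact hAu
  have hspan : (Submodule.span k {u}) ≤ LinearMap.ker f :=
    Submodule.span_le.mpr (Set.singleton_subset_iff.mpr huker)
  have hnotle : ¬ LinearMap.ker f ≤ Submodule.span k {u} := by
    intro hle
    have := Submodule.finrank_mono hle
    rw [finrank_span_singleton hv] at this
    omega
  obtain ⟨w, hwker, hwnot⟩ := SetLike.not_le_iff_exists.mp hnotle
  have hAw : A *ᵥ w = 0 := by
    rw [LinearMap.mem_ker, hf, Matrix.mulVecLin_apply] at hwker; exact hwker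
  have hw0 : w ≠ 0 := by
    rintro rfl; exact hwnot (Submodule.zero_mem _)
  have hli : ∀ x : Fin 3 → k, x 0 • v + x 1 • u + x 2 • w = 0 → x = 0 := by
    intro x hx
    have e1 : x 0 • u = 0 := by
      have := congrArg (A *ᵥ ·) hx
      simpa [Matrix.mulVec_add, Matrix.mulVec_smul, ← hu, hAu, hAw] using this
    have hx0 : x 0 = 0 := by
      rcases smul_eq_zero.mp e1 with h | h
      · exact h
      · exact absurd h hv
    rw [hx0, zero_smul, zero_add] at hx
    have hx2 : x 2 = 0 := by
      by_contra hx2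
      apply hwnot
      have : w = (-(x 2)⁻¹ * x 1) • u := by
        rw [neg_mul, neg_smul, eq_neg_iff_add_eq_zero, mul_smul]
        have := congrArg (fun z => (x 2)⁻¹ • z) hx
        simpa [smul_add, smul_smul, inv_mul_cancel₀ hx2, add_comm] using this
      rw [this]
      exact Submodule.smul_mem _ _ (Submodule.mem_span_singleton_self u)
    rw [hx2, zero_smul, add_zero] at hx
    have hx1 : x 1 = 0 := by
      rcases smul_eq_zero.mp hx with h | h
      · exact h
      · exact absurd h hv
    funext i
    fin_cases i <;> assumption
  have hdet := det_ne_zero_of ![v, u, w] (by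
    intro x hx
    apply hli
    simpa using hx)
  apply rel_of_conj hdet 1
  ext i j
  have hui := congrFun hu i
  have hAui := congrFun hAu i
  have hAwi := congrFun hAw i
  simp [Matrix.mul_apply, Matrix.mulVec, dotProduct, Fin.sum_univ_three] at hui hAui hAwi ⊢
  fin_cases j <;> simp [Fin.sum_univ_three] <;>
    first
      | linear_combination hui
      | linear_combination -hui
      | linear_combination hAui
      | linear_combination -hAui
      | linear_combination hAwi
      | linear_combination -hAwi

/-- Case `det A ≠ 0` (with `tr = e₂ = 0`): conjugate to `c • diag(1, ω, ω²)`. -/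
lemma caseDiag [IsAlgClosed k] (h3k : (3 : k) ≠ 0) (A : Matrix (Fin 3) (Fin 3) k)
    (htr : A.trace = 0) (he2 : e2Three A = 0) (hd : A.det ≠ 0)
    {ω : k} (hω : ω ^ 2 + ω + 1 = 0) :
    ∃ g : Matrix (Fin 3) (Fin 3) k, g.det = 1 ∧ ∃ c' : kˣ,
      g * A * g⁻¹ = (c' : k) • (!![1,0,0;0,ω,0;0,0,ω^2] : Matrix (Fin 3) (Fin 3) k) := by
  have hω3 : ω ^ 3 = 1 := by linear_combination (ω - 1) * hω
  have hω0 : ω ≠ 0 := by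
    rintro rfl; simp at hω3
  have hω1 : ω ≠ 1 := by
    rintro rfl; apply h3k; linear_combination hω
  have hω21 : ω ^ 2 ≠ 1 := by
    intro h
    apply h3k
    have h2 : ω = -2 := by linear_combination hω - h
    rw [h2] at h
    linear_combination h
  have hω2ω : ω ^ 2 ≠ ω := by
    intro h
    exact hω1 (mul_left_cancel₀ hω0 (by linear_combination h))
  obtain ⟨c, hc⟩ := IsAlgClosed.exists_pow_nat_eq A.det (by norm_num : 0 < 3)
  have hc0 : c ≠ 0 := by rintro rfl; simp at hc; exact hd hc.symm
  set μ : Fin 3 → k := ![c, c * ω, c * ω ^ 2] with hμ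
  have hμpow : ∀ j : Fin 3, μ j = c * ω ^ (j : ℕ) := by
    intro j; fin_cases j <;> simp [hμ]
  have hμ3 : ∀ j, μ j ^ 3 = A.det := by
    intro j
    rw [hμpow j, mul_pow, ← pow_mul, mul_comm (j : ℕ) 3, pow_mul, hω3, one_pow, mul_one, hc]
  have hμ0 : ∀ j, μ j ≠ 0 := by
    intro j h
    apply hd
    rw [← hμ3 j, h]
    ring
  have hμinj : Function.Injective μ := by
    intro a b hab
    rw [hμpow, hμpow] at hab
    have h := mul_left_cancel₀ hc0 hab
    fin_cases a <;> fin_cases b <;>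
      first
        | rfl
        | (simp only [pow_zero, pow_one] at h
           first
            | exact absurd h hω1
            | exact absurd h.symm hω1
            | exact absurd h hω21
            | exact absurd h.symm hω21
            | exact absurd h hω2ω
            | exact absurd h.symm hω2ω)
  have hvs : ∀ j : Fin 3, ∃ v : Fin 3 → k, v ≠ 0 ∧ A *ᵥ v = μ j • v := by
    intro j
    obtain ⟨v, h1, h2⟩ := eig_exists A htr he2 (μ j) (hμ3 j)
    exact ⟨v, h1, h2⟩
  choose vs hvs0 hvsA using hvs
  have hli' : LinearIndependent k vs := by
    apply Module.End.eigenvectors_linearIndependent' (Matrix.mulVecLin A) μ hμinj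
    intro j
    refine ⟨Module.End.mem_eigenspace_iff.mpr ?_, hvs0 j⟩
    rw [Matrix.mulVecLin_apply]
    exact hvsA j
  have hli := Fintype.linearIndependent_iff.mp hli'
  have hdet := det_ne_zero_of vs (by
    intro x hx
    funext i
    refine hli x ?_ i
    rw [Fin.sum_univ_three]
    exact hx)
  apply rel_of_conj hdet (Units.mk0 c hc0)
  ext i j
  fin_cases j
  · have hj := congrFun (hvsA 0) i
    simp [Matrix.mulVec, dotProduct, Fin.sum_univ_three, hμ] at hj
    simp [Matrix.mul_apply, Fin.sum_univ_three, Matrix.vecHead, Matrix.vecTail]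
    linear_combination hj
  · have hj := congrFun (hvsA 1) i
    simp [Matrix.mulVec, dotProduct, Fin.sum_univ_three, hμ] at hj
    simp [Matrix.mul_apply, Fin.sum_univ_three, Matrix.vecHead, Matrix.vecTail]
    linear_combination hj
  · have hj := congrFun (hvsA 2) i
    simp [Matrix.mulVec, dotProduct, Fin.sum_univ_three, hμ] at hj
    simp [Matrix.mul_apply, Fin.sum_univ_three, Matrix.vecHead, Matrix.vecTail]
    linear_combination hj

end Stmt11Aux

/-- Over an algebraically closed field of characteristic `≠ 3`, the group
`SL₃(k)` acting by conjugation on `sl₃(k)` has only finitely many orbits on singular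
`1`-spaces, i.e. on lines `⟨A⟩` with `0 ≠ A`, `Tr(A) = 0` and `e₂(A) = 0`. -/
theorem stmt11 (k : Type*) [Field k] [IsAlgClosed k] (h3 : (3 : k) ≠ 0) :
    Finite (Quot (fun A B : {A : Matrix (Fin 3) (Fin 3) k //
        A ≠ 0 ∧ A.trace = 0 ∧ e2Three A = 0} =>
      ∃ g : Matrix (Fin 3) (Fin 3) k, g.det = 1 ∧
        ∃ c : kˣ, g * A.1 * g⁻¹ = (c : k) • B.1)) := by
  classical
  obtain ⟨ω, hω⟩ : ∃ ω : k, ω ^ 2 + ω + 1 = 0 := by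
    obtain ⟨ω, hω⟩ := IsAlgClosed.exists_root
      (p := (Polynomial.X ^ 2 + Polynomial.X + 1 : Polynomial k)) (by
        have hdeg : (Polynomial.X ^ 2 + Polynomial.X + 1 : Polynomial k).degree = 2 := by
          compute_degree!
        rw [hdeg]
        decide)
    refine ⟨ω, ?_⟩
    simpa [Polynomial.IsRoot] using hω
  have hω3 : ω ^ 3 = 1 := by linear_combination (ω - 1) * hω
  let rep0 : {A : Matrix (Fin 3) (Fin 3) k // A ≠ 0 ∧ A.trace = 0 ∧ e2Three A = 0} :=
    ⟨!![1,0,0;0,ω,0;0,0,ω^2], by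
      intro h; simpa using congrFun (congrFun h 0) 0, by
      rw [trace_eq]; simp [Matrix.vecHead, Matrix.vecTail]; linear_combination hω, by
      rw [e2Three_eq]; simp [Matrix.vecHead, Matrix.vecTail]; linear_combination hω + hω3⟩
  let rep1 : {A : Matrix (Fin 3) (Fin 3) k // A ≠ 0 ∧ A.trace = 0 ∧ e2Three A = 0} :=
    ⟨!![0,0,0;1,0,0;0,1,0], by
      intro h; simpa using congrFun (congrFun h 1) 0, by
      rw [trace_eq]; simp [Matrix.vecHead, Matrix.vecTail], by
      rw [e2Three_eq]; simp [Matrix.vecHead, Matrix.vecTail]⟩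
  let rep2 : {A : Matrix (Fin 3) (Fin 3) k // A ≠ 0 ∧ A.trace = 0 ∧ e2Three A = 0} :=
    ⟨!![0,0,0;1,0,0;0,0,0], by
      intro h; simpa using congrFun (congrFun h 1) 0, by
      rw [trace_eq]; simp [Matrix.vecHead, Matrix.vecTail], by
      rw [e2Three_eq]; simp [Matrix.vecHead, Matrix.vecTail]⟩
  apply Finite.of_surjective
    (f := fun i : Fin 3 => Quot.mk _ (![rep0, rep1, rep2] i))
  intro x
  induction x using Quot.ind with
  | _ s =>
  obtain ⟨A, hA0, hAtr, hAe2⟩ := s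
  by_cases hd : A.det = 0
  · have hA3 : A * A * A = 0 := by
      have h := ch3 A
      rw [hAtr, hAe2, hd] at h
      simpa using h
    by_cases h2 : A * A = 0
    · exact ⟨2, (Quot.sound (caseJ2 A h2 hA0)).symm⟩
    · exact ⟨1, (Quot.sound (caseJ3 A hA3 h2)).symm⟩
  · exact ⟨0, (Quot.sound (caseDiag h3 A hAtr hAe2 hd hω)).symm⟩
end

section
/- Let k be an algebraically closed field, let J be the 6×6 matrix whose (i, 7−i) entry is 1 for 1 ≤ i ≤ 3 and −1 for 4 ≤ i ≤ 6 (all other entries 0), let Sp₆(k) = {g ∈ GL₆(k) : gᵀJg = J}, and let Sp₆(k) × Sp₆(k) act on M₆(k) by (g,h)·A = gAhᵀ. Define Q(A) = Σ_{i=1}^{3} Σ_{j=1}^{6} ε_j A_{i,j}A_{7−i,7−j}, where ε_j = 1 for j ≤ 3 and ε_j = −1 for j ≥ 4. Then there are infinitely many Sp₆(k) × Sp₆(k)-orbits on the set of singular 1-spaces, i.e. on the set of lines ⟨A⟩ with 0 ≠ A ∈ M₆(k) and Q(A) = 0. -/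
open Matrix

/-- The Gram matrix of the symplectic form on `k⁶`: the `(i, 7-i)` entry is `1` for
`1 ≤ i ≤ 3` and `-1` for `4 ≤ i ≤ 6` (written `0`-based using `Fin.rev`). -/
def sympJ6 (k : Type*) [Field k] : Matrix (Fin 6) (Fin 6) k :=
  Matrix.of fun i j : Fin 6 =>
    if j = i.rev then (if (i : ℕ) < 3 then (1 : k) else -1) else 0

/-- The symplectic group `Sp₆(k) = {g : gᵀ J g = J}` (such `g` are automatically
invertible). -/
def sp6Set (k : Type*) [Field k] : Set (Matrix (Fin 6) (Fin 6) k) :=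
  {g | gᵀ * sympJ6 k * g = sympJ6 k}

/-- The `Sp₆ × Sp₆`-invariant quadratic form
`Q(A) = Σ_{i=1}^{3} Σ_{j=1}^{6} ε_j A_{i,j} A_{7-i,7-j}`, `ε_j = 1` for `j ≤ 3`, `ε_j = -1`
for `j ≥ 4` (indices written `0`-based using `Fin.rev`). -/
def qSp6Sp6 {k : Type*} [Field k] (A : Matrix (Fin 6) (Fin 6) k) : k :=
  ∑ i : Fin 6, if (i : ℕ) < 3 then
    ∑ j : Fin 6, (if (j : ℕ) < 3 then (1 : k) else -1) * (A i j * A i.rev j.rev)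
  else 0

namespace Stmt16Aux

variable {k : Type*} [Field k]

lemma rev0 : (0 : Fin 6).rev = 5 := by decide
lemma rev1 : (1 : Fin 6).rev = 4 := by decide
lemma rev2 : (2 : Fin 6).rev = 3 := by decide
lemma rev3 : (3 : Fin 6).rev = 2 := by decide
lemma rev4 : (4 : Fin 6).rev = 1 := by decide
lemma rev5 : (5 : Fin 6).rev = 0 := by decide

section VecEval

variable {α : Type*} (a b c d e f : α)

lemma cv0 : ![a,b,c,d,e,f] (0 : Fin 6) = a := rfl
lemma cv1 : ![a,b,c,d,e,f] (1 : Fin 6) = b := rfl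
lemma cv2 : ![a,b,c,d,e,f] (2 : Fin 6) = c := rfl
lemma cv3 : ![a,b,c,d,e,f] (3 : Fin 6) = d := rfl
lemma cv4 : ![a,b,c,d,e,f] (4 : Fin 6) = e := rfl
lemma cv5 : ![a,b,c,d,e,f] (5 : Fin 6) = f := rfl
lemma cvlast : ![a,b,c,d,e,f] (Fin.last 5) = f := rfl

end VecEval

lemma sympJ6_eq : sympJ6 k = !![0,0,0,0,0,1; 0,0,0,0,1,0; 0,0,0,1,0,0;
    0,0,-1,0,0,0; 0,-1,0,0,0,0; -1,0,0,0,0,0] := by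
  ext i j
  fin_cases i <;> fin_cases j <;> rfl

set_option maxHeartbeats 1000000 in
lemma JJ : sympJ6 k * sympJ6 k = -1 := by
  rw [sympJ6_eq]
  ext i j
  fin_cases i <;> fin_cases j <;>
    norm_num [Matrix.mul_apply, Fin.sum_univ_succ, Matrix.one_apply] <;> decide

lemma detJ_mul_detJ : det (sympJ6 k) * det (sympJ6 k) = 1 := by
  rw [← Matrix.det_mul, JJ, Matrix.det_neg]
  norm_num

lemma detJ_ne_zero : det (sympJ6 k) ≠ 0 := by
  intro h
  have := detJ_mul_detJ (k := k)
  rw [h, mul_zero] at this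
  exact zero_ne_one this

section Sp

variable {g : Matrix (Fin 6) (Fin 6) k} (hg : g ∈ sp6Set k)

/-- candidate inverse of a symplectic matrix -/
noncomputable def spInv (g : Matrix (Fin 6) (Fin 6) k) : Matrix (Fin 6) (Fin 6) k :=
  -(sympJ6 k * gᵀ * sympJ6 k)

include hg

lemma spInv_mul : spInv g * g = 1 := by
  have hg' : gᵀ * sympJ6 k * g = sympJ6 k := hg
  have : sympJ6 k * gᵀ * sympJ6 k * g = sympJ6 k * sympJ6 k := by
    rw [Matrix.mul_assoc (sympJ6 k * gᵀ), Matrix.mul_assoc (sympJ6 k),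
      ← Matrix.mul_assoc gᵀ, hg']
  rw [spInv, Matrix.neg_mul, this, JJ, neg_neg]

lemma mul_spInv : g * spInv g = 1 :=
  mul_eq_one_comm.mp (spInv_mul hg)

lemma det_sq : det g * det g = 1 := by
  have hg' : gᵀ * sympJ6 k * g = sympJ6 k := hg
  have h1 : det g * det (sympJ6 k) * det g = det (sympJ6 k) := by
    have := congrArg Matrix.det hg'
    rwa [Matrix.det_mul, Matrix.det_mul, Matrix.det_transpose] at this
  have h2 : (det g * det g) * det (sympJ6 k) = 1 * det (sympJ6 k) := by
    rw [one_mul]; linear_combination h1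
  exact mul_right_cancel₀ detJ_ne_zero h2

end Sp

lemma sandwich {g g' M : Matrix (Fin 6) (Fin 6) k} (hg'g : g' * g = 1) :
    ∀ n : ℕ, (g * M * g') ^ (n + 1) = g * M ^ (n + 1) * g' := by
  intro n
  induction n with
  | zero => simp
  | succ n ih =>
    have hstep : (g * M * g') ^ (n + 1 + 1) = (g * M * g') ^ (n + 1) * (g * M * g') :=
      pow_succ _ _
    rw [hstep, ih]
    calc g * M ^ (n + 1) * g' * (g * M * g')
        = g * M ^ (n + 1) * (g' * g) * M * g' := by
          simp only [Matrix.mul_assoc]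
      _ = g * M ^ (n + 1) * M * g' := by rw [hg'g, Matrix.mul_one]
      _ = g * M ^ (n + 1 + 1) * g' := by
          rw [pow_succ M (n + 1)]
          simp only [← Matrix.mul_assoc]

/-- The invariant:  `det(M⁶ - (det A)² ⬝ 1) / (det A)¹²` where `M = A J Aᵀ J`. -/
noncomputable def finv (A : Matrix (Fin 6) (Fin 6) k) : k :=
  det ((A * sympJ6 k * Aᵀ * sympJ6 k) ^ 6 - (det A) ^ 2 • (1 : Matrix (Fin 6) (Fin 6) k))
    / (det A) ^ 12

lemma finv_action {g h A : Matrix (Fin 6) (Fin 6) k}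
    (hg : g ∈ sp6Set k) (hh : h ∈ sp6Set k) :
    finv (g * A * hᵀ) = finv A := by
  have hgg' : g * spInv g = 1 := mul_spInv hg
  have hg'g : spInv g * g = 1 := spInv_mul hg
  have hJJ : ∀ X : Matrix (Fin 6) (Fin 6) k, sympJ6 k * (sympJ6 k * X) = -X := by
    intro X; rw [← Matrix.mul_assoc, JJ, Matrix.neg_mul, one_mul]
  have hhJ : ∀ X : Matrix (Fin 6) (Fin 6) k,
      hᵀ * (sympJ6 k * (h * X)) = sympJ6 k * X := by
    intro X
    have hh' : hᵀ * sympJ6 k * h = sympJ6 k := hh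
    rw [← Matrix.mul_assoc, ← Matrix.mul_assoc, hh']
  -- the conjugation formula
  have hM' : (g * A * hᵀ) * sympJ6 k * (g * A * hᵀ)ᵀ * sympJ6 k
      = g * (A * sympJ6 k * Aᵀ * sympJ6 k) * spInv g := by
    have rhs : g * (A * sympJ6 k * Aᵀ * sympJ6 k) * spInv g
        = g * (A * (sympJ6 k * (Aᵀ * (gᵀ * sympJ6 k)))) := by
      rw [spInv]
      simp only [Matrix.mul_assoc, Matrix.mul_neg, Matrix.neg_mul]
      rw [hJJ (gᵀ * sympJ6 k)]
      simp only [Matrix.mul_neg, neg_neg]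
    have lhs : (g * A * hᵀ) * sympJ6 k * (g * A * hᵀ)ᵀ * sympJ6 k
        = g * (A * (hᵀ * (sympJ6 k * (h * (Aᵀ * (gᵀ * sympJ6 k)))))) := by
      simp only [Matrix.transpose_mul, Matrix.transpose_transpose, Matrix.mul_assoc]
    rw [lhs, rhs, hhJ (Aᵀ * (gᵀ * sympJ6 k))]
  -- determinants
  have hdetgg' : det g * det (spInv g) = 1 := by
    rw [← Matrix.det_mul, hgg', Matrix.det_one]
  have hdet : det (g * A * hᵀ) = det g * det h * det A := by
    rw [Matrix.det_mul, Matrix.det_mul, Matrix.det_transpose]; ring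
  have hdet2 : det (g * A * hᵀ) ^ 2 = det A ^ 2 := by
    rw [hdet]
    have e1 := det_sq hg
    have e2 := det_sq hh
    linear_combination (det h * det h * det A ^ 2) * e1 + det A ^ 2 * e2
  have hdet12 : det (g * A * hᵀ) ^ 12 = det A ^ 12 := by
    have h6 : det (g * A * hᵀ) ^ 12 = (det (g * A * hᵀ) ^ 2) ^ 6 := by ring
    rw [h6, hdet2]; ring
  -- sandwich powers
  have sand : ∀ n : ℕ, (g * (A * sympJ6 k * Aᵀ * sympJ6 k) * spInv g) ^ (n + 1)
      = g * (A * sympJ6 k * Aᵀ * sympJ6 k) ^ (n + 1) * spInv g :=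
    sandwich hg'g
  have key : ((g * A * hᵀ) * sympJ6 k * (g * A * hᵀ)ᵀ * sympJ6 k) ^ 6
        - det (g * A * hᵀ) ^ 2 • (1 : Matrix (Fin 6) (Fin 6) k)
      = g * ((A * sympJ6 k * Aᵀ * sympJ6 k) ^ 6
          - det A ^ 2 • (1 : Matrix (Fin 6) (Fin 6) k)) * spInv g := by
    rw [hM', hdet2, sand 5]
    rw [Matrix.mul_sub, Matrix.sub_mul]
    congr 1
    rw [Matrix.mul_smul, Matrix.mul_one, Matrix.smul_mul, hgg']
  rw [finv, finv, key, hdet12, Matrix.det_mul, Matrix.det_mul]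
  have hre : det g * det ((A * sympJ6 k * Aᵀ * sympJ6 k) ^ 6
        - det A ^ 2 • (1 : Matrix (Fin 6) (Fin 6) k)) * det (spInv g)
      = det ((A * sympJ6 k * Aᵀ * sympJ6 k) ^ 6
        - det A ^ 2 • (1 : Matrix (Fin 6) (Fin 6) k)) * (det g * det (spInv g)) := by
    ring
  rw [hre, hdetgg', mul_one]

lemma finv_smul (c : kˣ) (B : Matrix (Fin 6) (Fin 6) k) :
    finv ((c : k) • B) = finv B := by
  have hMc : ((c : k) • B) * sympJ6 k * ((c : k) • B)ᵀ * sympJ6 k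
      = ((c : k) * (c : k)) • (B * sympJ6 k * Bᵀ * sympJ6 k) := by
    simp only [Matrix.transpose_smul, Matrix.smul_mul, Matrix.mul_smul, smul_smul]
  have hpow : (((c : k) * (c : k)) • (B * sympJ6 k * Bᵀ * sympJ6 k)) ^ 6
      = ((c : k) ^ 12) • (B * sympJ6 k * Bᵀ * sympJ6 k) ^ 6 := by
    rw [smul_pow]
    congr 1
    ring
  have hdet : det ((c : k) • B) = (c : k) ^ 6 * det B := by
    rw [Matrix.det_smul]
    norm_num
  have hnum : (((c : k) • B) * sympJ6 k * ((c : k) • B)ᵀ * sympJ6 k) ^ 6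
        - det ((c : k) • B) ^ 2 • (1 : Matrix (Fin 6) (Fin 6) k)
      = ((c : k) ^ 12) • ((B * sympJ6 k * Bᵀ * sympJ6 k) ^ 6
          - det B ^ 2 • (1 : Matrix (Fin 6) (Fin 6) k)) := by
    rw [hMc, hpow, hdet, smul_sub, smul_smul]
    congr 2
    ring
  have hc12 : ((c : k) ^ 12) ^ 6 ≠ 0 := pow_ne_zero _ (pow_ne_zero _ c.ne_zero)
  rw [finv, finv, hnum, hdet, Matrix.det_smul]
  simp only [Fintype.card_fin]
  rw [show ((c : k) ^ 6 * det B) ^ 12 = ((c : k) ^ 12) ^ 6 * det B ^ 12 by ring]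
  exact mul_div_mul_left _ _ hc12

/-- the test family of diagonal matrices -/
noncomputable def At (t : k) : Matrix (Fin 6) (Fin 6) k :=
  Matrix.diagonal ![t, 1, -(1+t), 1, 1, 1]

lemma At_ne_zero (t : k) : At t ≠ 0 := by
  intro h
  have := congrFun (congrFun h 1) 1
  simp [At, Matrix.diagonal_apply_eq, cv1] at this

set_option maxHeartbeats 1000000 in
lemma qAt (t : k) : qSp6Sp6 (At t) = 0 := by
  rw [qSp6Sp6]
  simp only [Fin.sum_univ_six]
  simp only [rev0, rev1, rev2, rev3, rev4, rev5]
  simp (config := { decide := true }) only [At, Matrix.diagonal_apply,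
    cv0, cv1, cv2, cv3, cv4, cv5, if_true, if_false]
  norm_num
  ring

set_option maxHeartbeats 1000000 in
lemma MAt (t : k) : At t * sympJ6 k * (At t)ᵀ * sympJ6 k
    = Matrix.diagonal ![-t, -1, 1+t, 1+t, -1, -t] := by
  have hAtlit : At t = !![t,0,0,0,0,0; 0,1,0,0,0,0; 0,0,-(1+t),0,0,0;
      0,0,0,1,0,0; 0,0,0,0,1,0; 0,0,0,0,0,1] := by
    ext i j
    fin_cases i <;> fin_cases j <;> rfl
  have hMlit : Matrix.diagonal ![-t, -1, 1+t, 1+t, -1, -t]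
      = !![-t,0,0,0,0,0; 0,-1,0,0,0,0; 0,0,1+t,0,0,0;
          0,0,0,1+t,0,0; 0,0,0,0,-1,0; 0,0,0,0,0,-t] := by
    ext i j
    fin_cases i <;> fin_cases j <;> rfl
  have hPlit : At t * sympJ6 k = !![0,0,0,0,0,t; 0,0,0,0,1,0; 0,0,0,-(1+t),0,0;
      0,0,-1,0,0,0; 0,-1,0,0,0,0; -1,0,0,0,0,0] := by
    rw [hAtlit, sympJ6_eq]
    ext i j
    fin_cases i <;> fin_cases j <;>
      norm_num [Matrix.mul_apply, Fin.sum_univ_succ, Fin.ext_iff]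
  rw [show (At t)ᵀ = At t from Matrix.diagonal_transpose _]
  rw [Matrix.mul_assoc (At t * sympJ6 k), hPlit, hMlit]
  ext i j
  fin_cases i <;> fin_cases j <;>
    norm_num [Matrix.mul_apply, Fin.sum_univ_succ, Fin.ext_iff]

lemma detAt (t : k) : det (At t) = -(t * (1 + t)) := by
  rw [At, Matrix.det_diagonal, Fin.prod_univ_six]
  simp only [cv0, cv1, cv2, cv3, cv4, cv5]
  ring

lemma finv_At (t : k) (h0 : t ≠ 0) (h1 : 1 + t ≠ 0) :
    finv (At t) * (t ^ 8 * (1 + t) ^ 8)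
      = ((t^4 - (1+t)^2) * (1 - t^2*(1+t)^2) * ((1+t)^4 - t^2)) ^ 2 := by
  rw [finv, MAt t, detAt t]
  rw [Matrix.diagonal_pow, Matrix.smul_one_eq_diagonal, Matrix.diagonal_sub,
    Matrix.det_diagonal, Fin.prod_univ_six]
  simp only [Pi.sub_apply, Pi.pow_apply, cv0, cv1, cv2, cv3, cv4, cv5]
  have hden : -(t * (1 + t)) ≠ 0 := by
    intro h
    rcases mul_eq_zero.mp (neg_eq_zero.mp h) with h' | h'
    · exact h0 h'
    · exact h1 h'
  field_simp

end Stmt16Aux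

open Stmt16Aux in
/-- Over an algebraically closed field, `Sp₆(k) × Sp₆(k)` acting on
`M₆(k) = k⁶ ⊗ k⁶` by `(g,h)·A = g A hᵀ` has infinitely many orbits on singular `1`-spaces,
i.e. on lines `⟨A⟩` with `0 ≠ A` and `Q(A) = 0`. -/
theorem stmt16 (k : Type*) [Field k] [IsAlgClosed k] :
    Infinite (Quot (fun A B : {A : Matrix (Fin 6) (Fin 6) k // A ≠ 0 ∧ qSp6Sp6 A = 0} =>
      ∃ g ∈ sp6Set k, ∃ h ∈ sp6Set k, ∃ c : kˣ,
        g * A.1 * hᵀ = (c : k) • B.1)) := by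
  set r := (fun A B : {A : Matrix (Fin 6) (Fin 6) k // A ≠ 0 ∧ qSp6Sp6 A = 0} =>
      ∃ g ∈ sp6Set k, ∃ h ∈ sp6Set k, ∃ c : kˣ,
        g * A.1 * hᵀ = (c : k) • B.1) with hr
  have hlift : ∀ A B, r A B → finv A.1 = finv B.1 := by
    rintro A B ⟨g, hg, h, hh, c, hc⟩
    have h1 : finv (g * A.1 * hᵀ) = finv A.1 := finv_action hg hh
    have h2 : finv ((c : k) • B.1) = finv B.1 := finv_smul c B.1
    rw [← h1, hc, h2]
  set F : Quot r → k := Quot.lift (fun A => finv A.1) hlift with hF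
  by_contra hinf
  rw [not_infinite_iff_finite] at hinf
  set Φ : k → Quot r := fun t => Quot.mk r ⟨At t, At_ne_zero t, qAt t⟩ with hΦ
  have fiber_fin : ∀ v : k, {t : k | finv (At t) = v}.Finite := by
    intro v
    set P : Polynomial k :=
      ((Polynomial.X^4 - (1 + Polynomial.X)^2) * (1 - Polynomial.X^2*(1 + Polynomial.X)^2)
        * ((1 + Polynomial.X)^4 - Polynomial.X^2)) ^ 2
      - Polynomial.C v * (Polynomial.X^8 * (1 + Polynomial.X)^8) with hPdef
    have hPne : P ≠ 0 := by
      intro h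
      have := congrArg (Polynomial.eval (0 : k)) h
      simp [hPdef] at this
    apply Set.Finite.subset (((Set.finite_singleton (0 : k)).union
      (Set.finite_singleton (-1 : k))).union (Polynomial.finite_setOf_isRoot hPne))
    intro t ht
    by_cases ht0 : t = 0
    · exact Or.inl (Or.inl ht0)
    by_cases ht1 : t = -1
    · exact Or.inl (Or.inr ht1)
    · right
      have h1t : 1 + t ≠ 0 := by
        intro hcon
        apply ht1
        linear_combination hcon
      have hkey := finv_At t ht0 h1t
      have ht' : finv (At t) = v := ht
      rw [ht'] at hkey
      show Polynomial.IsRoot P t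
      rw [Polynomial.IsRoot, hPdef]
      simp only [Polynomial.eval_sub, Polynomial.eval_mul, Polynomial.eval_pow,
        Polynomial.eval_add, Polynomial.eval_one, Polynomial.eval_X, Polynomial.eval_C]
      rw [← hkey]
      ring
  have hcov : (Set.univ : Set k) ⊆ ⋃ q : Quot r, {t : k | finv (At t) = F q} := by
    intro t _
    exact Set.mem_iUnion.mpr ⟨Φ t, rfl⟩
  have hfin : (Set.univ : Set k).Finite :=
    Set.Finite.subset (Set.finite_iUnion fun q => fiber_fin (F q)) hcov
  exact Set.infinite_univ hfin
end

section
/- Let k be an algebraically closed field and let a, b ≥ 3 be integers. Let J_{2a} be the 2a×2a matrix whose (i, 2a+1−i) entry is 1 for i ≤ a and −1 for i > a (all other entries 0), and similarly J_{2b}; let Sp_{2a}(k) = {g : gᵀJ_{2a}g = J_{2a}} and Sp_{2b}(k) = {g : gᵀJ_{2b}g = J_{2b}}, acting on the space M_{2a×2b}(k) of 2a×2b matrices by (g,h)·A = gAhᵀ. Define Q(A) = Σ_{i=1}^{a} Σ_{j=1}^{2b} ε_j A_{i,j}A_{2a+1−i,2b+1−j}, where ε_j = 1 for j ≤ b and ε_j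 = −1 for j > b. Then there are infinitely many Sp_{2a}(k) × Sp_{2b}(k)-orbits on the set of singular 1-spaces, i.e. on the set of lines ⟨A⟩ with 0 ≠ A ∈ M_{2a×2b}(k) and Q(A) = 0. -/
/-!
If `g A hᵀ = c B` with `g, h` symplectic, then `N(A) = A J_b Aᵀ J_a` satisfies
`c² N(B) = g N(A) g⁻¹`, because `hᵀ J_b h = J_b` and `gᵀ J_a = J_a g⁻¹`. Hence the finite set
of ratios `μ / λ` of eigenvalues of `N(A)` (with `λ ≠ 0`) only depends on the orbit of `⟨A⟩`.
For `A_t = Σ_{p<3} (e_p ⊗ f_p + w_p e_p̄ ⊗ f_p̄)` with `(w_0, w_1, w_2) = (1, t, -1 - t)`, where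
`p̄` is the partner of `p` in a hyperbolic pair, we have `Q(A_t) = w_0 + w_1 + w_2 = 0`, and
`N(A_t)` has the eigenvalues `-w_p`, so `t` is one of these ratios. Finitely many orbits would
therefore cover the infinite field `k` by finitely many finite sets.
-/

open Matrix

/-- The Gram matrix `J_{2n}` of the standard symplectic form on `k^{2n}`: the
`(i, 2n+1-i)` entry is `1` for `i ≤ n` and `-1` for `i > n` (written `0`-based using
`Fin.rev`). -/
def sympJ (k : Type*) [Field k] (n : ℕ) : Matrix (Fin (2 * n)) (Fin (2 * n)) k :=
  Matrix.of fun i j : Fin (2 * n) =>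
    if j = i.rev then (if (i : ℕ) < n then (1 : k) else -1) else 0

/-- The `Sp_{2a} × Sp_{2b}`-invariant quadratic form
`Q(A) = Σ_{i=1}^{a} Σ_{j=1}^{2b} ε_j A_{i,j} A_{2a+1-i,2b+1-j}`, `ε_j = 1` for `j ≤ b`,
`ε_j = -1` for `j > b` (indices written `0`-based using `Fin.rev`). -/
def qSymp {k : Type*} [Field k] {a b : ℕ} (A : Matrix (Fin (2 * a)) (Fin (2 * b)) k) : k :=
  ∑ i : Fin (2 * a), if (i : ℕ) < a then
    ∑ j : Fin (2 * b), (if (j : ℕ) < b then (1 : k) else -1) * (A i j * A i.rev j.rev)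
  else 0

section Symplectic

variable {k : Type*} [Field k] {n : ℕ}

lemma sympJ_mulVec_single (i : Fin (2 * n)) :
    sympJ k n *ᵥ Pi.single i 1 = (if (i : ℕ) < n then -1 else 1 : k) • Pi.single i.rev 1 := by
  ext r
  by_cases hr : r = i.rev
  · subst hr
    have : ¬ ((i.rev : ℕ) < n ↔ (i : ℕ) < n) := by simp only [Fin.val_rev]; omega
    by_cases hi : (i : ℕ) < n <;> simp_all [sympJ]
  · have : i ≠ r.rev := fun h => hr (by rw [h, Fin.rev_rev])
    simp [sympJ, hr, this]

lemma sympJ_mul_sympJ : sympJ k n * sympJ k n = -1 := by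
  refine Matrix.ext_of_mulVec_single fun i => ?_
  have : ¬ ((i.rev : ℕ) < n ↔ (i : ℕ) < n) := by simp only [Fin.val_rev]; omega
  rw [← Matrix.mulVec_mulVec, sympJ_mulVec_single, Matrix.mulVec_smul, sympJ_mulVec_single,
    Fin.rev_rev, smul_smul, Matrix.neg_mulVec, Matrix.one_mulVec]
  by_cases hi : (i : ℕ) < n <;> simp_all

def symplecticUnit {g : Matrix (Fin (2 * n)) (Fin (2 * n)) k}
    (hg : gᵀ * sympJ k n * g = sympJ k n) : (Matrix (Fin (2 * n)) (Fin (2 * n)) k)ˣ :=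
  have hinv : -(sympJ k n * gᵀ * sympJ k n) * g = 1 := by
    rw [Matrix.neg_mul, Matrix.mul_assoc, Matrix.mul_assoc, ← Matrix.mul_assoc gᵀ, hg,
      sympJ_mul_sympJ, neg_neg]
  { val := g, inv := -(sympJ k n * gᵀ * sympJ k n), val_inv := mul_eq_one_comm.mp hinv,
    inv_val := hinv }

lemma transpose_mul_sympJ {g : Matrix (Fin (2 * n)) (Fin (2 * n)) k}
    (hg : gᵀ * sympJ k n * g = sympJ k n) :
    gᵀ * sympJ k n =
      sympJ k n * (↑(symplecticUnit hg)⁻¹ : Matrix (Fin (2 * n)) (Fin (2 * n)) k) := by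
  change _ = sympJ k n * -(sympJ k n * gᵀ * sympJ k n)
  rw [Matrix.mul_neg, ← Matrix.mul_assoc, ← Matrix.mul_assoc, sympJ_mul_sympJ, Matrix.neg_mul,
    Matrix.neg_mul, Matrix.one_mul, neg_neg]

end Symplectic

section SymplecticSquare

variable {k : Type*} [Field k] {a b : ℕ}

/-- The matrix `N(A)` of the header: up to sign, `A` composed with its adjoint with respect to
the two symplectic forms. -/
def symplecticSquare (A : Matrix (Fin (2 * a)) (Fin (2 * b)) k) :
    Matrix (Fin (2 * a)) (Fin (2 * a)) k :=
  A * sympJ k b * Aᵀ * sympJ k a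

lemma smul_symplecticSquare_eq_conj {A B : Matrix (Fin (2 * a)) (Fin (2 * b)) k}
    {g : Matrix (Fin (2 * a)) (Fin (2 * a)) k} (hg : gᵀ * sympJ k a * g = sympJ k a)
    {h : Matrix (Fin (2 * b)) (Fin (2 * b)) k} (hh : hᵀ * sympJ k b * h = sympJ k b)
    {c : kˣ} (hB : g * A * hᵀ = (c : k) • B) :
    (c ^ 2) • symplecticSquare B =
      symplecticUnit hg * symplecticSquare A *
        (↑(symplecticUnit hg)⁻¹ : Matrix (Fin (2 * a)) (Fin (2 * a)) k) := by
  calc (c ^ 2) • symplecticSquare B = (c : k) • B * sympJ k b * ((c : k) • B)ᵀ * sympJ k a := by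
        simp only [symplecticSquare, Matrix.transpose_smul, Matrix.smul_mul, Matrix.mul_smul,
          smul_smul, Units.smul_def, sq, Units.val_mul]
    _ = g * A * (hᵀ * sympJ k b * h) * Aᵀ * (gᵀ * sympJ k a) := by
        rw [← hB, Matrix.transpose_mul, Matrix.transpose_mul, Matrix.transpose_transpose]
        simp only [Matrix.mul_assoc]
    _ = _ := by
        rw [hh, transpose_mul_sympJ hg]
        simp only [symplecticSquare, Matrix.mul_assoc]
        rfl

end SymplecticSquare

section RatioSet

variable {K : Type*} [CommGroupWithZero K]

def ratioSet (S : Set K) : Set K := {t | ∃ x ∈ S, x ≠ 0 ∧ t * x ∈ S}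

open scoped Pointwise in
lemma ratioSet_smul (c : Kˣ) (S : Set K) : ratioSet (c • S) = ratioSet S := by
  ext t
  simp only [ratioSet, Set.mem_ofPred_eq, Set.mem_smul_set_iff_inv_smul_mem]
  simp only [Units.smul_def, smul_eq_mul]
  constructor
  · rintro ⟨x, hx, hx0, htx⟩
    exact ⟨_, hx, mul_ne_zero (Units.ne_zero _) hx0, by rwa [mul_left_comm]⟩
  · rintro ⟨x, hx, hx0, htx⟩
    refine ⟨c * x, by rwa [Units.inv_mul_cancel_left], mul_ne_zero (Units.ne_zero _) hx0, ?_⟩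
    rwa [mul_left_comm, Units.inv_mul_cancel_left]

lemma Set.Finite.ratioSet {S : Set K} (hS : S.Finite) : (ratioSet S).Finite :=
  (hS.image2 (· / ·) hS).subset fun t ⟨x, hx, hx0, htx⟩ =>
    ⟨t * x, htx, x, hx, mul_div_cancel_right₀ t hx0⟩

end RatioSet

lemma Matrix.mem_spectrum_of_mulVec_eq_smul {n K : Type*} [Fintype n] [DecidableEq n] [Field K]
    {M : Matrix n n K} {v : n → K} (hv : v ≠ 0) {μ : K} (h : M *ᵥ v = μ • v) :
    μ ∈ spectrum K M := by
  rw [← Matrix.spectrum_toLin', ← Module.End.hasEigenvalue_iff_mem_spectrum]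
  exact Module.End.hasEigenvalue_of_hasEigenvector
    ⟨Module.End.mem_eigenspace_iff.2 (by simpa using h), hv⟩

lemma ratioSet_spectrum_symplecticSquare_eq {k : Type*} [Field k] {a b : ℕ}
    {A B : Matrix (Fin (2 * a)) (Fin (2 * b)) k}
    {g : Matrix (Fin (2 * a)) (Fin (2 * a)) k} (hg : gᵀ * sympJ k a * g = sympJ k a)
    {h : Matrix (Fin (2 * b)) (Fin (2 * b)) k} (hh : hᵀ * sympJ k b * h = sympJ k b)
    {c : kˣ} (hB : g * A * hᵀ = (c : k) • B) :
    ratioSet (spectrum k (symplecticSquare A)) = ratioSet (spectrum k (symplecticSquare B)) := by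
  rw [← ratioSet_smul (c ^ 2) (spectrum k (symplecticSquare B)), ← spectrum.unit_smul_eq_smul,
    smul_symplecticSquare_eq_conj hg hh hB, spectrum.units_conjugate]

section HyperbolicDiag

variable {k : Type*} [Field k]

/-- `Σ_{p<m} (e_p ⊗ f_p + w p • e_p̄ ⊗ f_p̄)` with `p̄ = Fin.rev p`; the two cases of the
definition are exclusive when `m ≤ a` and `m ≤ b`. -/
def hyperbolicDiag (a b m : ℕ) (w : ℕ → k) : Matrix (Fin (2 * a)) (Fin (2 * b)) k :=
  Matrix.of fun i j =>
    if (i : ℕ) = j ∧ (i : ℕ) < m then 1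
    else if (i.rev : ℕ) = j.rev ∧ (i.rev : ℕ) < m then w i.rev else 0

variable {a b m : ℕ} (w : ℕ → k)

lemma hyperbolicDiag_mulVec_single (hma : m ≤ a) (hmb : m ≤ b) {p : ℕ} (hp : p < m) :
    hyperbolicDiag a b m w *ᵥ Pi.single (⟨p, by omega⟩ : Fin (2 * b)) 1 =
      Pi.single (⟨p, by omega⟩ : Fin (2 * a)) 1 := by
  ext r
  simp only [mulVec_single_one, col_apply, hyperbolicDiag, of_apply, Pi.single_apply,
    Fin.ext_iff, Fin.val_rev]
  have := r.isLt
  split_ifs <;> first | rfl | omega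

lemma hyperbolicDiag_transpose_mulVec_single_rev (hma : m ≤ a) (hmb : m ≤ b) {p : ℕ}
    (hp : p < m) :
    (hyperbolicDiag a b m w)ᵀ *ᵥ Pi.single (Fin.rev (⟨p, by omega⟩ : Fin (2 * a))) 1 =
      w p • Pi.single (Fin.rev (⟨p, by omega⟩ : Fin (2 * b))) 1 := by
  ext r
  simp only [mulVec_single_one, col_apply, transpose_apply, hyperbolicDiag, of_apply,
    Pi.single_apply, Fin.ext_iff, Fin.val_rev, Pi.smul_apply, smul_eq_mul]
  have := r.isLt
  split_ifs <;> simp only [mul_one, mul_zero] <;> first | rfl | omega | (congr 1; omega)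

lemma hyperbolicDiag_ne_zero (hm : 0 < m) (hma : m ≤ a) (hmb : m ≤ b) :
    hyperbolicDiag a b m w ≠ 0 := by
  intro h
  have h00 := congrFun (congrFun h ⟨0, by omega⟩) ⟨0, by omega⟩
  simp [hyperbolicDiag, hm] at h00

lemma qSymp_hyperbolicDiag (hma : m ≤ a) (hmb : m ≤ b) :
    qSymp (hyperbolicDiag a b m w) = ∑ p ∈ Finset.range m, w p := by
  have hterm : ∀ i : Fin (2 * a), (i : ℕ) < a → ∀ j : Fin (2 * b),
      (if (j : ℕ) < b then (1 : k) else -1) *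
        (hyperbolicDiag a b m w i j * hyperbolicDiag a b m w i.rev j.rev) =
      if (i : ℕ) = j ∧ (i : ℕ) < m then w i else 0 := by
    intro i hi j
    have := j.isLt
    simp only [hyperbolicDiag, of_apply, Fin.val_rev]
    split_ifs <;> simp only [one_mul, mul_one, mul_zero, zero_mul] <;>
      first | rfl | omega | (congr 1; omega)
  have hrow : ∀ i : Fin (2 * a),
      (if (i : ℕ) < a then ∑ j : Fin (2 * b), (if (j : ℕ) < b then (1 : k) else -1) *
        (hyperbolicDiag a b m w i j * hyperbolicDiag a b m w i.rev j.rev) else 0) =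
      if (i : ℕ) < m then w i else 0 := by
    intro i
    split_ifs with hia him
    · rw [Finset.sum_congr rfl fun j _ => hterm i hia j,
        Fin.sum_univ_eq_sum_range (fun n => if (i : ℕ) = n ∧ (i : ℕ) < m then w i else 0)]
      simp [him]
      omega
    · exact Finset.sum_eq_zero fun j _ => by rw [hterm i hia j, if_neg (by omega)]
    · omega
    · rfl
  rw [qSymp, Finset.sum_congr rfl fun i _ => hrow i,
    Fin.sum_univ_eq_sum_range (fun n => if n < m then w n else 0),
    ← Finset.sum_subset (Finset.range_subset_range.2 (by omega : m ≤ 2 * a))]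
  · exact Finset.sum_congr rfl fun n hn => if_pos (Finset.mem_range.1 hn)
  · exact fun n _ hn => if_neg (by simpa using hn)

lemma neg_mem_spectrum_symplecticSquare_hyperbolicDiag (hma : m ≤ a) (hmb : m ≤ b) {p : ℕ}
    (hp : p < m) : -w p ∈ spectrum k (symplecticSquare (hyperbolicDiag a b m w)) := by
  refine Matrix.mem_spectrum_of_mulVec_eq_smul (v := Pi.single (⟨p, by omega⟩ : Fin (2 * a)) 1)
    (by simp) ?_
  have hpa : p < a := by omega
  have hpb : ¬ ((Fin.rev (⟨p, by omega⟩ : Fin (2 * b)) : ℕ) < b) := by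
    simp only [Fin.val_rev]; omega
  simp only [symplecticSquare, ← mulVec_mulVec, sympJ_mulVec_single, if_pos hpa, if_neg hpb,
    mulVec_smul, hyperbolicDiag_transpose_mulVec_single_rev w hma hmb hp, Fin.rev_rev,
    hyperbolicDiag_mulVec_single w hma hmb hp, smul_smul]
  simp

end HyperbolicDiag

lemma infinite_quot_of_finite_invariant {α β : Type*} [Infinite β] {r : α → α → Prop}
    (f : α → Set β) (hf : ∀ x y, r x y → f x = f y) (hfin : ∀ x, (f x).Finite)
    (hcover : ∀ z, ∃ x, z ∈ f x) : Infinite (Quot r) := by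
  rw [← not_finite_iff_infinite]
  intro
  have hunion : (⋃ q, Quot.lift f hf q).Finite := Set.finite_iUnion fun q => by
    induction q using Quot.ind
    exact hfin _
  refine Set.infinite_univ (hunion.subset fun z _ => ?_)
  obtain ⟨x, hx⟩ := hcover z
  exact Set.mem_iUnion.2 ⟨Quot.mk r x, hx⟩

/-- Over an algebraically closed field, for `a, b ≥ 3` the group
`Sp_{2a}(k) × Sp_{2b}(k)` acting on `M_{2a×2b}(k) = k^{2a} ⊗ k^{2b}` by `(g,h)·A = g A hᵀ`
has infinitely many orbits on singular `1`-spaces, i.e. on lines `⟨A⟩` with `0 ≠ A` and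
`Q(A) = 0`. -/
theorem stmt17 (k : Type*) [Field k] [IsAlgClosed k] (a b : ℕ) (ha : 3 ≤ a) (hb : 3 ≤ b) :
    Infinite (Quot (fun A B : {A : Matrix (Fin (2 * a)) (Fin (2 * b)) k //
        A ≠ 0 ∧ qSymp A = 0} =>
      ∃ g : Matrix (Fin (2 * a)) (Fin (2 * a)) k, gᵀ * sympJ k a * g = sympJ k a ∧
      ∃ h : Matrix (Fin (2 * b)) (Fin (2 * b)) k, hᵀ * sympJ k b * h = sympJ k b ∧
      ∃ c : kˣ, g * A.1 * hᵀ = (c : k) • B.1)) := by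
  refine infinite_quot_of_finite_invariant (fun A => ratioSet (spectrum k (symplecticSquare A.1)))
    (fun _ _ ⟨_, hg, _, hh, _, hB⟩ => ratioSet_spectrum_symplecticSquare_eq hg hh hB)
    (fun _ => (Matrix.finite_spectrum _).ratioSet) fun t => ?_
  let w : ℕ → k := ([1, t, -1 - t].getD · 0)
  have hQ : qSymp (hyperbolicDiag a b 3 w) = 0 := by
    rw [qSymp_hyperbolicDiag w ha hb]
    simp [w, Finset.sum_range_succ]
  refine ⟨⟨hyperbolicDiag a b 3 w, hyperbolicDiag_ne_zero w three_pos ha hb, hQ⟩, -1,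
    ?_, by norm_num, ?_⟩
  · simpa [w] using neg_mem_spectrum_symplecticSquare_hyperbolicDiag w ha hb (p := 0) three_pos
  · simpa [w] using
      neg_mem_spectrum_symplecticSquare_hyperbolicDiag w ha hb (p := 1) (by norm_num)
end

section
/- Let k be an algebraically closed field with char k ≠ 2 and let m, n ≥ 3 be integers. Let SO_m(k) = {g ∈ M_m(k) : gᵀg = I, det g = 1} and similarly SO_n(k), acting on the space M_{m×n}(k) of m×n matrices by (g,h)·A = gAhᵀ. Then there are infinitely many SO_m(k) × SO_n(k)-orbits on the set of singular 1-spaces, i.e. on the set of lines ⟨A⟩ with 0 ≠ A ∈ M_{m×n}(k) and Tr(AᵀA) = 0. -/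
open Matrix Polynomial

section StmtAux

variable {k : Type*} [Field k] {m n : ℕ}

/-- The basic invariants: traces of powers of `Aᵀ * A`. -/
private noncomputable def pjs (A : Matrix (Fin m) (Fin n) k) (j : ℕ) : k :=
  Matrix.trace ((Aᵀ * A) ^ j)

/-- A scale-invariant rational combination of the `pjs`. -/
private noncomputable def fInv (A : Matrix (Fin m) (Fin n) k) : k :=
  pjs A 2 ^ 7 *
    (8 * pjs A 3 ^ 2 * pjs A 2 ^ 4 - 12 * pjs A 5 ^ 2 * pjs A 2 ^ 2 + pjs A 7 ^ 2)⁻¹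

private lemma mconj_pow (h Y : Matrix (Fin n) (Fin n) k) (hh : hᵀ * h = 1) (j : ℕ) :
    (h * Y * hᵀ) ^ j = h * Y ^ j * hᵀ := by
  induction j with
  | zero => rw [pow_zero, pow_zero, Matrix.mul_one, mul_eq_one_comm.mp hh]
  | succ j ih =>
    rw [pow_succ, pow_succ, ih]
    have key : hᵀ * (h * (Y * hᵀ)) = Y * hᵀ := by
      rw [← Matrix.mul_assoc, hh, Matrix.one_mul]
    simp only [Matrix.mul_assoc, key]

private lemma pjs_rel {A B : Matrix (Fin m) (Fin n) k} {g : Matrix (Fin m) (Fin m) k}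
    {h : Matrix (Fin n) (Fin n) k} {c : k}
    (hg : gᵀ * g = 1) (hh : hᵀ * h = 1) (he : g * A * hᵀ = c • B) (j : ℕ) :
    pjs A j = c ^ (2 * j) * pjs B j := by
  have key : h * (Aᵀ * A) * hᵀ = c ^ 2 • (Bᵀ * B) := by
    have h1 : (g * A * hᵀ)ᵀ * (g * A * hᵀ) = c ^ 2 • (Bᵀ * B) := by
      rw [he, Matrix.transpose_smul, Matrix.smul_mul, Matrix.mul_smul, smul_smul, ← pow_two]
    have h2 : (g * A * hᵀ)ᵀ * (g * A * hᵀ) = h * (Aᵀ * A) * hᵀ := by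
      have ht : (g * A * hᵀ)ᵀ = h * (Aᵀ * gᵀ) := by
        rw [Matrix.transpose_mul, Matrix.transpose_mul, Matrix.transpose_transpose]
      rw [ht]
      have hassoc : h * (Aᵀ * gᵀ) * (g * A * hᵀ) = h * (Aᵀ * (gᵀ * g) * (A * hᵀ)) := by
        simp only [Matrix.mul_assoc]
      rw [hassoc, hg, Matrix.mul_one]
      simp only [Matrix.mul_assoc]
    rw [← h2, h1]
  have t1 : Matrix.trace (h * (Aᵀ * A) ^ j * hᵀ) = Matrix.trace ((Aᵀ * A) ^ j) := by
    rw [Matrix.trace_mul_comm, ← Matrix.mul_assoc, hh, Matrix.one_mul]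
  calc pjs A j = Matrix.trace ((Aᵀ * A) ^ j) := rfl
    _ = Matrix.trace (h * (Aᵀ * A) ^ j * hᵀ) := t1.symm
    _ = Matrix.trace ((h * (Aᵀ * A) * hᵀ) ^ j) := by rw [mconj_pow h (Aᵀ * A) hh j]
    _ = Matrix.trace ((c ^ 2 • (Bᵀ * B)) ^ j) := by rw [key]
    _ = c ^ (2 * j) * Matrix.trace ((Bᵀ * B) ^ j) := by
        rw [_root_.smul_pow, Matrix.trace_smul, smul_eq_mul, ← pow_mul]
    _ = c ^ (2 * j) * pjs B j := rfl

private lemma fInv_rel {A B : Matrix (Fin m) (Fin n) k} {g : Matrix (Fin m) (Fin m) k}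
    {h : Matrix (Fin n) (Fin n) k} {c : k}
    (hg : gᵀ * g = 1) (hh : hᵀ * h = 1) (hc : c ≠ 0) (he : g * A * hᵀ = c • B) :
    fInv A = fInv B := by
  have e2 := pjs_rel hg hh he 2
  have e3 := pjs_rel hg hh he 3
  have e5 := pjs_rel hg hh he 5
  have e7 := pjs_rel hg hh he 7
  unfold fInv
  rw [e2, e3, e5, e7,
    show 8 * (c ^ (2 * 3) * pjs B 3) ^ 2 * (c ^ (2 * 2) * pjs B 2) ^ 4 -
        12 * (c ^ (2 * 5) * pjs B 5) ^ 2 * (c ^ (2 * 2) * pjs B 2) ^ 2 +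
        (c ^ (2 * 7) * pjs B 7) ^ 2
      = c ^ 28 * (8 * pjs B 3 ^ 2 * pjs B 2 ^ 4 - 12 * pjs B 5 ^ 2 * pjs B 2 ^ 2 +
        pjs B 7 ^ 2) from by ring,
    show (c ^ (2 * 2) * pjs B 2) ^ 7 = c ^ 28 * pjs B 2 ^ 7 from by ring,
    mul_inv,
    show c ^ 28 * pjs B 2 ^ 7 * ((c ^ 28)⁻¹ *
        (8 * pjs B 3 ^ 2 * pjs B 2 ^ 4 - 12 * pjs B 5 ^ 2 * pjs B 2 ^ 2 + pjs B 7 ^ 2)⁻¹)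
      = (c ^ 28 * (c ^ 28)⁻¹) * (pjs B 2 ^ 7 *
        (8 * pjs B 3 ^ 2 * pjs B 2 ^ 4 - 12 * pjs B 5 ^ 2 * pjs B 2 ^ 2 + pjs B 7 ^ 2)⁻¹)
      from by ring,
    mul_inv_cancel₀ (pow_ne_zero 28 hc), one_mul]

/-- A rectangular "diagonal" matrix. -/
private def recdiag (m n : ℕ) (e : ℕ → k) : Matrix (Fin m) (Fin n) k :=
  Matrix.of fun i j => if (i : ℕ) = (j : ℕ) then e (j : ℕ) else 0

private lemma recdiag_mul (hm : 3 ≤ m) (e : ℕ → k) (he : ∀ t, 3 ≤ t → e t = 0) :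
    (recdiag m n e)ᵀ * recdiag m n e
      = Matrix.diagonal (fun j : Fin n => e (j : ℕ) ^ 2) := by
  ext i j
  rw [Matrix.mul_apply]
  simp only [recdiag, Matrix.transpose_apply, Matrix.of_apply]
  by_cases hij : i = j
  · subst hij
    rw [Matrix.diagonal_apply_eq]
    by_cases him : (i : ℕ) < m
    · rw [Finset.sum_eq_single (⟨(i : ℕ), him⟩ : Fin m)
        (fun b _ hb => by rw [if_neg fun hbv => hb (Fin.ext hbv), zero_mul])
        (fun habs => absurd (Finset.mem_univ _) habs)]
      rw [if_pos rfl]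
      exact (pow_two _).symm
    · have h0 : e (i : ℕ) = 0 := he _ (le_trans hm (not_lt.mp him))
      rw [h0]
      simp
  · rw [Matrix.diagonal_apply_ne _ hij]
    have hvij : (i : ℕ) ≠ (j : ℕ) := fun hv => hij (Fin.ext hv)
    apply Finset.sum_eq_zero
    intro x _
    split_ifs <;> first | omega | simp

private lemma trace_pow_diag (hn : 3 ≤ n) (d : ℕ → k) (hd : ∀ t, 3 ≤ t → d t = 0) (J : ℕ) :
    Matrix.trace ((Matrix.diagonal (fun j : Fin n => d (j : ℕ))) ^ (J + 1))
      = d 0 ^ (J + 1) + d 1 ^ (J + 1) + d 2 ^ (J + 1) := by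
  rw [Matrix.diagonal_pow, Matrix.trace_diagonal]
  simp only [Pi.pow_apply]
  rw [Fin.sum_univ_eq_sum_range (fun t => d t ^ (J + 1)) n]
  rw [← Finset.sum_subset (Finset.range_subset_range.mpr hn)
    (fun t _ ht => by
      rw [hd t (by simp [Finset.mem_range] at ht; omega), zero_pow (Nat.succ_ne_zero J)])]
  rw [Finset.sum_range_succ, Finset.sum_range_succ, Finset.sum_range_succ,
    Finset.sum_range_zero, zero_add]

private def dFun (w : k) : ℕ → k := fun t =>
  if t = 0 then 1 else if t = 1 then w else if t = 2 then -1 - w else 0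

private def eFun (s : k → k) (w : k) : ℕ → k := fun t =>
  if t = 0 then 1 else if t = 1 then s w else if t = 2 then s (-1 - w) else 0

private lemma eFun_sq (s : k → k) (hs : ∀ x, s x ^ 2 = x) (w : k) (t : ℕ) :
    eFun s w t ^ 2 = dFun w t := by
  unfold eFun dFun
  split_ifs <;> simp [hs]

private lemma dFun_big (w : k) (t : ℕ) (ht : 3 ≤ t) : dFun w t = 0 := by
  unfold dFun
  rw [if_neg (by omega), if_neg (by omega), if_neg (by omega)]

private lemma eFun_big (s : k → k) (w : k) (t : ℕ) (ht : 3 ≤ t) : eFun s w t = 0 := by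
  unfold eFun
  rw [if_neg (by omega), if_neg (by omega), if_neg (by omega)]

private noncomputable def Pnum (k : Type*) [Field k] : Polynomial k :=
  (X ^ 2 + X + 1) ^ 4 * X ^ 2 * (X + 1) ^ 2

private noncomputable def Pden (k : Type*) [Field k] : Polynomial k :=
  (C 2 * (X ^ 2 + X + 1)) ^ 7

private lemma monic_quad : (X ^ 2 + X + 1 : Polynomial k).Monic := by
  have h : (X ^ 2 + X + 1 : Polynomial k) = X ^ 2 + (X + 1) := by ring
  rw [h]
  apply Polynomial.monic_X_pow_add
  have h1 : ((X : Polynomial k) + 1).degree = 1 := by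
    simpa using Polynomial.degree_X_add_C (1 : k)
  rw [h1]
  norm_num

private lemma monic_lin : (X + 1 : Polynomial k).Monic := by
  simpa using Polynomial.monic_X_add_C (1 : k)

private lemma Pnum_monic : (Pnum k).Monic := by
  unfold Pnum
  exact ((monic_quad.pow 4).mul (Polynomial.monic_X_pow 2)).mul (monic_lin.pow 2)

private lemma Pnum_natDegree_le : (Pnum k).natDegree ≤ 12 := by
  unfold Pnum
  compute_degree

private lemma Pnum_eval (w : k) :
    (Pnum k).eval w = (w ^ 2 + w + 1) ^ 4 * w ^ 2 * (w + 1) ^ 2 := by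
  unfold Pnum
  simp

private lemma Pden_eval (w : k) : (Pden k).eval w = (2 * (w ^ 2 + w + 1)) ^ 7 := by
  unfold Pden
  simp

private lemma Pden_coeff : (Pden k).coeff 14 = 2 ^ 7 := by
  unfold Pden
  rw [mul_pow, ← Polynomial.C_pow, Polynomial.coeff_C_mul]
  have h1 : ((X ^ 2 + X + 1 : Polynomial k) ^ 7).natDegree = 14 := by
    rw [Polynomial.natDegree_pow,
      show (X ^ 2 + X + 1 : Polynomial k).natDegree = 2 from by compute_degree!]
  have h2 : ((X ^ 2 + X + 1 : Polynomial k) ^ 7).coeff 14 = 1 := by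
    have := (monic_quad.pow 7 : ((X ^ 2 + X + 1 : Polynomial k) ^ 7).Monic).coeff_natDegree
    rwa [h1] at this
  rw [h2, mul_one]

private theorem main_aux (k : Type*) [Field k] [IsAlgClosed k] (h2 : (2 : k) ≠ 0)
    (m n : ℕ) (hm : 3 ≤ m) (hn : 3 ≤ n)
    (r : {A : Matrix (Fin m) (Fin n) k // A ≠ 0 ∧ (Aᵀ * A).trace = 0} →
      {A : Matrix (Fin m) (Fin n) k // A ≠ 0 ∧ (Aᵀ * A).trace = 0} → Prop)
    (hr : ∀ A B, r A B →
      ∃ g : Matrix (Fin m) (Fin m) k, gᵀ * g = 1 ∧ g.det = 1 ∧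
      ∃ h : Matrix (Fin n) (Fin n) k, hᵀ * h = 1 ∧ h.det = 1 ∧
      ∃ c : kˣ, g * A.1 * hᵀ = (c : k) • B.1) :
    Infinite (Quot r) := by
  rw [← not_finite_iff_infinite]
  intro hfin
  classical
  -- the orbit invariant
  let f : Quot r → k := Quot.lift (fun A => fInv A.1) (by
    intro A B hAB
    obtain ⟨g, hg, -, h, hh, -, c, he⟩ := hr A B hAB
    exact fInv_rel hg hh c.ne_zero he)
  -- square roots
  have sqrt : ∀ x : k, ∃ z : k, z ^ 2 = x := fun x =>
    IsAlgClosed.exists_pow_nat_eq x (by norm_num)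
  choose s hs using sqrt
  -- the family of singular matrices
  have hdiagw : ∀ w : k, (recdiag m n (eFun s w))ᵀ * recdiag m n (eFun s w)
      = Matrix.diagonal (fun j : Fin n => dFun w (j : ℕ)) := by
    intro w
    rw [recdiag_mul hm (eFun s w) (eFun_big s w)]
    have hfe : (fun j : Fin n => eFun s w (j : ℕ) ^ 2) = fun j : Fin n => dFun w (j : ℕ) :=
      funext fun j => eFun_sq s hs w _
    rw [hfe]
  have hpjw : ∀ (w : k) (J : ℕ), pjs (recdiag m n (eFun s w)) (J + 1)
      = 1 + w ^ (J + 1) + (-1 - w) ^ (J + 1) := by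
    intro w J
    unfold pjs
    rw [hdiagw w, trace_pow_diag hn (dFun w) (dFun_big w) J]
    simp [dFun]
  have hne : ∀ w : k, recdiag m n (eFun s w) ≠ 0 := by
    intro w hA
    have h00 : recdiag m n (eFun s w) ⟨0, by omega⟩ (⟨0, by omega⟩ : Fin n) = 1 := by
      simp [recdiag, eFun]
    rw [hA] at h00
    simp at h00
  have htr0 : ∀ w : k, ((recdiag m n (eFun s w))ᵀ * recdiag m n (eFun s w)).trace = 0 := by
    intro w
    have h1 : pjs (recdiag m n (eFun s w)) 1 = 1 + w ^ 1 + (-1 - w) ^ 1 := hpjw w 0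
    unfold pjs at h1
    rw [pow_one] at h1
    rw [h1]; ring
  -- the invariant along the family
  set F : k → k := fun w => fInv (recdiag m n (eFun s w)) with hF
  have hFval : ∀ w : k, F w = (2 * (w ^ 2 + w + 1)) ^ 7 *
      ((w ^ 2 + w + 1) ^ 4 * w ^ 2 * (w + 1) ^ 2)⁻¹ := by
    intro w
    have e2 : pjs (recdiag m n (eFun s w)) 2 = 1 + w ^ 2 + (-1 - w) ^ 2 := hpjw w 1
    have e3 : pjs (recdiag m n (eFun s w)) 3 = 1 + w ^ 3 + (-1 - w) ^ 3 := hpjw w 2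
    have e5 : pjs (recdiag m n (eFun s w)) 5 = 1 + w ^ 5 + (-1 - w) ^ 5 := hpjw w 4
    have e7 : pjs (recdiag m n (eFun s w)) 7 = 1 + w ^ 7 + (-1 - w) ^ 7 := hpjw w 6
    show fInv (recdiag m n (eFun s w)) = _
    unfold fInv
    rw [e2, e3, e5, e7]
    congr 1
    · ring
    · congr 1
      ring
  -- fibers of F are finite
  have hfib : ∀ v : k, {w : k | F w = v}.Finite := by
    intro v
    have hPnum_ne : Pnum k ≠ 0 := Pnum_monic.ne_zero
    have hr_ne : Pden k - C v * Pnum k ≠ 0 := by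
      intro h0
      have hc : (Pden k - C v * Pnum k).coeff 14 = 0 := by rw [h0]; simp
      rw [Polynomial.coeff_sub, Polynomial.coeff_C_mul, Pden_coeff,
        Polynomial.coeff_eq_zero_of_natDegree_lt
          (lt_of_le_of_lt Pnum_natDegree_le (by norm_num)),
        mul_zero, sub_zero] at hc
      exact pow_ne_zero 7 h2 hc
    apply Set.Finite.subset
      ((Polynomial.finite_setOf_isRoot hr_ne).union (Polynomial.finite_setOf_isRoot hPnum_ne))
    intro w hw
    simp only [Set.mem_setOf_eq] at hw
    rw [hFval w] at hw
    by_cases hz : (w ^ 2 + w + 1) ^ 4 * w ^ 2 * (w + 1) ^ 2 = 0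
    · refine Set.mem_union_right _ ?_
      show (Pnum k).IsRoot w
      rw [Polynomial.IsRoot, Pnum_eval]
      exact hz
    · refine Set.mem_union_left _ ?_
      rw [← div_eq_mul_inv, div_eq_iff hz] at hw
      show (Pden k - C v * Pnum k).IsRoot w
      rw [Polynomial.IsRoot, Polynomial.eval_sub, Polynomial.eval_mul, Polynomial.eval_C,
        Pden_eval, Pnum_eval, hw]
      ring
  -- conclude
  have hfinrange : (Set.range f).Finite := Set.finite_range f
  have hcov : (Set.univ : Set k) ⊆ ⋃ v ∈ Set.range f, {w : k | F w = v} := by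
    intro w _
    have hokay : F w = f (Quot.mk r ⟨recdiag m n (eFun s w), hne w, htr0 w⟩) := rfl
    refine Set.mem_biUnion (⟨Quot.mk r ⟨recdiag m n (eFun s w), hne w, htr0 w⟩, rfl⟩ :
      f (Quot.mk r ⟨recdiag m n (eFun s w), hne w, htr0 w⟩) ∈ Set.range f) hokay
  have huniv : (Set.univ : Set k).Finite :=
    Set.Finite.subset (hfinrange.biUnion fun v _ => hfib v) hcov
  exact Set.infinite_univ huniv

end StmtAux

/-- Over an algebraically closed field of characteristic `≠ 2`, for
`m, n ≥ 3` the group `SO_m(k) × SO_n(k)` acting on `M_{m×n}(k) = k^m ⊗ k^n` by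
`(g,h)·A = g A hᵀ` has infinitely many orbits on singular `1`-spaces, i.e. on lines `⟨A⟩`
with `0 ≠ A` and `Tr(AᵀA) = 0`. -/
theorem stmt19 (k : Type*) [Field k] [IsAlgClosed k] (h2 : (2 : k) ≠ 0)
    (m n : ℕ) (hm : 3 ≤ m) (hn : 3 ≤ n) :
    Infinite (Quot (fun A B : {A : Matrix (Fin m) (Fin n) k //
        A ≠ 0 ∧ (Aᵀ * A).trace = 0} =>
      ∃ g : Matrix (Fin m) (Fin m) k, gᵀ * g = 1 ∧ g.det = 1 ∧
      ∃ h : Matrix (Fin n) (Fin n) k, hᵀ * h = 1 ∧ h.det = 1 ∧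
      ∃ c : kˣ, g * A.1 * hᵀ = (c : k) • B.1)) :=
  main_aux k h2 m n hm hn _ (fun _ _ hab => hab)
end
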